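/- arXiv:1606.05525 — 4 statements merged into one kernel-verified Lean document; each statement's English description precedes it below -/
import Mathlib

section
/- Let u be an infinite word over a finite alphabet A whose language L(u) is closed under reversal. If D(u) > 0, then either (1) there exists a non-palindromic factor q ∈ L(u) such that the graph Γ(q) contains a cycle, or (2) there exists a palindromic factor q ∈ L(u) such that the graph Θ(q) contains a cycle. Moreover, if the empty word is the unique factor q with this property, then there exists a letter of A having a non-palindromic complete return word in u. -/
namespace ZDC

variable {A : Type*}

/-- The finite word `u_i u_{i+1} ⋯ u_{i+n-1}` occurring at position `i` in `u`. -/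
def factorAt (u : ℕ → A) (i n : ℕ) : List A := (List.range n).map (fun j => u (i + j))

/-- `w` occurs at index `i` in the infinite word `u`. -/
def OccursAt (u : ℕ → A) (w : List A) (i : ℕ) : Prop := w = factorAt u i w.length

/-- The language of the infinite word `u`: the set of its factors. -/
def Lang (u : ℕ → A) : Set (List A) := {w | ∃ i, OccursAt u w i}

/-- The language of `u` is closed under reversal. -/
def ClosedUnderReversal (u : ℕ → A) : Prop := ∀ w ∈ Lang u, w.reverse ∈ Lang u

/-- Number of distinct palindromic factors of a finite word (the empty word counts). -/
noncomputable def palCount (w : List A) : ℕ := {v : List A | v <:+: w ∧ v.reverse = v}.ncard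

/-- Palindromic defect of a finite word: `|w| + 1 - p(w)`. -/
noncomputable def wordDefect (w : List A) : ℕ := w.length + 1 - palCount w

/-- Palindromic defect of an infinite word: sup of defects of its factors, in `ℕ∞`. -/
noncomputable def Defect (u : ℕ → A) : ℕ∞ := ⨆ w ∈ Lang u, (wordDefect w : ℕ∞)

/-- `u` contains infinitely many palindromic factors. -/
def Palindromic (u : ℕ → A) : Prop := ∀ N, ∃ w ∈ Lang u, N ≤ w.length ∧ w.reverse = w

/-- `u` is (purely) periodic: `u = zzz⋯` for a nonempty `z`. -/
def Periodic (u : ℕ → A) : Prop := ∃ p, 0 < p ∧ ∀ n, u (n + p) = u n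

/-- `u` is eventually periodic: `u = v zzz⋯`. -/
def EventuallyPeriodic (u : ℕ → A) : Prop := ∃ p, 0 < p ∧ ∃ N, ∀ n ≥ N, u (n + p) = u n

/-- `r` is a complete return word to `w` in `u`: it stretches from one occurrence of `w`
to the next one (inclusively). -/
def IsCompleteReturn (u : ℕ → A) (w r : List A) : Prop :=
  ∃ i j, i < j ∧ OccursAt u w i ∧ OccursAt u w j ∧
    (∀ k, i < k → k < j → ¬ OccursAt u w k) ∧
    r = factorAt u i (j + w.length - i)

/-- `c` is a complete mirror return to `w` in `u`. -/
def IsCompleteMirrorReturn (u : ℕ → A) (w c : List A) : Prop :=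
  c ∈ Lang u ∧
  ¬ w <:+: (c.drop 1).dropLast ∧ ¬ w.reverse <:+: (c.drop 1).dropLast ∧
  ((w <+: c ∧ w.reverse <:+ c) ∨ (w.reverse <+: c ∧ w <:+ c))

/-- Occurrences of `w` and its reversal alternate in `u`. -/
def Alternate (u : ℕ → A) (w : List A) : Prop :=
  (∀ i j, i < j → OccursAt u w i → OccursAt u w j →
    (∀ k, i < k → k < j → ¬ OccursAt u w k) →
    ∃ k, i ≤ k ∧ k ≤ j ∧ OccursAt u w.reverse k) ∧
  (∀ i j, i < j → OccursAt u w.reverse i → OccursAt u w.reverse j →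
    (∀ k, i < k → k < j → ¬ OccursAt u w.reverse k) →
    ∃ k, i ≤ k ∧ k ≤ j ∧ OccursAt u w k)

/-- Left extensions `E⁻(w)`. -/
def Eminus (u : ℕ → A) (w : List A) : Set A := {a | a :: w ∈ Lang u}

/-- Right extensions `E⁺(w)`. -/
def Eplus (u : ℕ → A) (w : List A) : Set A := {b | w ++ [b] ∈ Lang u}

/-- Bilateral extensions `E(w)`. -/
def Eboth (u : ℕ → A) (w : List A) : Set (A × A) := {p | p.1 :: (w ++ [p.2]) ∈ Lang u}

/-- Symmetric bilateral extensions `E⁼(w)`. -/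
def Esym (u : ℕ → A) (w : List A) : Set A := {a | a :: (w ++ [a]) ∈ Lang u}

/-- Bilateral multiplicity `m(w) = #E(w) − #E⁺(w) − #E⁻(w) + 1`. -/
noncomputable def mult (u : ℕ → A) (w : List A) : ℤ :=
  ((Eboth u w).ncard : ℤ) - (Eplus u w).ncard - (Eminus u w).ncard + 1

/-- `w` is a bispecial factor of `u`. -/
def Bispecial (u : ℕ → A) (w : List A) : Prop :=
  2 ≤ (Eminus u w).ncard ∧ 2 ≤ (Eplus u w).ncard

/-- The bipartite extension graph `Γ(w)` with vertex set `E⁻(w) ⊔ E⁺(w)`. -/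
def GammaGraph (u : ℕ → A) (w : List A) : SimpleGraph (↥(Eminus u w) ⊕ ↥(Eplus u w)) :=
  SimpleGraph.fromRel (fun x y =>
    ∃ (a : ↥(Eminus u w)) (b : ↥(Eplus u w)),
      x = Sum.inl a ∧ y = Sum.inr b ∧ ((a : A), (b : A)) ∈ Eboth u w)

/-- The graph `Θ(w)` on the vertex set `E⁻(w)` for a palindrome `w`. -/
def ThetaGraph (u : ℕ → A) (w : List A) : SimpleGraph (↥(Eminus u w)) :=
  SimpleGraph.fromRel (fun a b => ((a : A), (b : A)) ∈ Eboth u w)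

/-- Factor complexity `C(n)`. -/
noncomputable def complexity (u : ℕ → A) (n : ℕ) : ℕ :=
  {w ∈ Lang u | w.length = n}.ncard

/-- Palindromic complexity `P(n)`. -/
noncomputable def palComplexity (u : ℕ → A) (n : ℕ) : ℕ :=
  {w ∈ Lang u | w.length = n ∧ w.reverse = w}.ncard

/-- Extension of a morphism (given by its letter images) to finite words. -/
def Apply (φ : A → List A) (x : List A) : List A := x.flatMap φ

/-- A morphism is primitive if some power maps each letter to a word containing all letters. -/
def Primitive (φ : A → List A) : Prop :=
  ∃ k, 1 ≤ k ∧ ∀ a b : A, b ∈ (Apply φ)^[k] [a]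

/-- `u` is a fixed point of `φ`: the image of every prefix of `u` is again a prefix of `u`. -/
def IsFixedPoint (φ : A → List A) (u : ℕ → A) : Prop :=
  ∀ n, Apply φ (factorAt u 0 n) = factorAt u 0 (Apply φ (factorAt u 0 n)).length

/-- `ψ ▷ φ`: `ψ` is a left conjugate of `φ` with conjugate word `w`,
i.e. `φ(a)w = wψ(a)` for every letter `a`. -/
def LeftConj (ψ φ : A → List A) (w : List A) : Prop :=
  ∀ a, φ a ++ w = w ++ ψ a

/-- A morphism is cyclic if all images of letters are powers of a common word. -/
def Cyclic (φ : A → List A) : Prop :=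
  ∃ w : List A, ∀ a, ∃ k : ℕ, φ a = (List.replicate k w).flatten

/-- First letter (as an `Option`) of the image of a letter. -/
def Fst (φ : A → List A) : A → Option A := fun a => (φ a).head?

/-- Last letter (as an `Option`) of the image of a letter. -/
def Lst (φ : A → List A) : A → Option A := fun a => (φ a).getLast?

/-- `φL` is the leftmost conjugate of `φ`: a left conjugate whose first-letter map
is not constant. -/
def IsLeftmostConj (φL φ : A → List A) : Prop :=
  (∃ w, LeftConj φL φ w) ∧ ¬ (∀ a b, Fst φL a = Fst φL b)

/-- `φR` is the rightmost conjugate of `φ`: a right conjugate whose last-letter map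
is not constant. -/
def IsRightmostConj (φR φ : A → List A) : Prop :=
  (∃ w, LeftConj φ φR w) ∧ ¬ (∀ a b, Lst φR a = Lst φR b)

/-- A marked morphism: acyclic, and the first-letter map of its leftmost conjugate and
the last-letter map of its rightmost conjugate are injective. -/
def Marked (φ : A → List A) : Prop :=
  ¬ Cyclic φ ∧
  (∃ φL, IsLeftmostConj φL φ ∧ Function.Injective (Fst φL)) ∧
  (∃ φR, IsRightmostConj φR φ ∧ Function.Injective (Lst φR))

end ZDC

namespace ZDCProof
open ZDC

variable {A : Type*}

/-- occurrence of the word `u[o..o+n)` at position `t` -/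
def fOcc (u : ℕ → A) (o n t : ℕ) : Prop := ∀ i < n, u (t+i) = u (o+i)
/-- occurrence of the reversal of `u[o..o+n)` at position `t` -/
def rOcc (u : ℕ → A) (o n t : ℕ) : Prop := ∀ i < n, u (t+i) = u (o+(n-1-i))
/-- `u[o..o+n)` is a palindrome -/
def palAt (u : ℕ → A) (o n : ℕ) : Prop := ∀ i < n, u (o+i) = u (o+(n-1-i))

variable {u : ℕ → A}

lemma fOcc_refl (o n : ℕ) : fOcc u o n o := fun _ _ => rfl

lemma fOcc_trans {o n s t : ℕ} (h1 : fOcc u o n s) (h2 : fOcc u s n t) : fOcc u o n t :=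
  fun i hi => (h2 i hi).trans (h1 i hi)

lemma rOcc_of_fOcc_palAt {o n t : ℕ} (hp : palAt u o n) (h : fOcc u o n t) : rOcc u o n t :=
  fun i hi => (h i hi).trans (hp i hi)

lemma fOcc_of_rOcc_palAt {o n t : ℕ} (hp : palAt u o n) (h : rOcc u o n t) : fOcc u o n t := by
  intro i hi
  have := h i hi
  rw [this, ← hp i hi]

lemma palAt_of_fOcc_rOcc {o n t : ℕ} (h1 : fOcc u o n t) (h2 : rOcc u o n t) : palAt u o n :=
  fun i hi => (h1 i hi).symm.trans (h2 i hi)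

@[simp] lemma factorAt_length (i n : ℕ) : (factorAt u i n).length = n := by
  simp [factorAt]

lemma factorAt_getElem {i n k : ℕ} (h : k < n) :
    (factorAt u i n)[k]'(by simpa using h) = u (i+k) := by
  simp [factorAt]

lemma factorAt_eq_iff {s t n : ℕ} :
    factorAt u s n = factorAt u t n ↔ ∀ i < n, u (s+i) = u (t+i) := by
  constructor
  · intro h i hi
    have := congrArg (fun l => l[i]?) h
    simpa [factorAt, hi] using this
  · intro h
    apply List.ext_getElem (by simp)
    intro k h1 h2
    simp only [factorAt, List.getElem_map, List.getElem_range]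
    exact h k (by simpa using h1)

lemma factorAt_succ_left (i n : ℕ) : factorAt u i (n+1) = u i :: factorAt u (i+1) n := by
  apply List.ext_getElem (by simp)
  intro k h1 h2
  rcases k with _ | k
  · simp [factorAt]
  · simp only [factorAt, List.getElem_map, List.getElem_range, List.getElem_cons_succ]
    congr 1
    omega

lemma factorAt_succ_right (i n : ℕ) : factorAt u i (n+1) = factorAt u i n ++ [u (i+n)] := by
  simp [factorAt, List.range_succ]

lemma factorAt_mem_lang (i n : ℕ) : factorAt u i n ∈ Lang u :=
  ⟨i, by simp [OccursAt]⟩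

lemma occursAt_factorAt_iff {o n t : ℕ} :
    OccursAt u (factorAt u o n) t ↔ fOcc u o n t := by
  rw [OccursAt, factorAt_length]
  rw [show (factorAt u o n = factorAt u t n) ↔ _ from factorAt_eq_iff]
  constructor <;> intro h i hi <;> exact (h i hi).symm

lemma reverse_factorAt_eq {t o n : ℕ} (h : rOcc u o n t) :
    (factorAt u t n).reverse = factorAt u o n := by
  apply List.ext_getElem (by simp)
  intro k h1 h2
  simp only [factorAt_length] at h1 h2
  rw [List.getElem_reverse]
  have hk : n - 1 - k < n := by omega
  rw [show (factorAt u t n)[(factorAt u t n).length - 1 - k]'(by simp; omega)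
      = u (t + (n-1-k)) by simp only [factorAt_length]; exact factorAt_getElem hk]
  rw [h _ hk, factorAt_getElem h2]
  congr 1
  omega

lemma palAt_reverse_eq {o n : ℕ} (hp : palAt u o n) :
    (factorAt u o n).reverse = factorAt u o n :=
  reverse_factorAt_eq (rOcc_of_fOcc_palAt hp (fOcc_refl o n))

lemma palAt_of_reverse_eq {o n : ℕ} (hp : (factorAt u o n).reverse = factorAt u o n) :
    palAt u o n := by
  intro i hi
  have h1 : ((factorAt u o n).reverse)[i]'(by simp [hi]) = (factorAt u o n)[i]'(by simp [hi]) := by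
    congr 1
  rw [List.getElem_reverse] at h1
  rw [factorAt_getElem hi] at h1
  rw [show ((factorAt u o n))[(factorAt u o n).length - 1 - i]'(by simp; omega)
      = u (o + (n-1-i)) by simp only [factorAt_length]; exact factorAt_getElem (by omega)] at h1
  exact h1.symm

end ZDCProof
-- STAGE2 (appended to stage1 content when testing)
namespace ZDCProof
open ZDC

variable {A : Type*} {u : ℕ → A}

lemma list_eq_factorAt_cons_append {t n : ℕ} {o : ℕ} (h : fOcc u o n t) (h1 : 1 ≤ t) :
    factorAt u (t-1) (n+2) = u (t-1) :: (factorAt u o n ++ [u (t+n)]) := by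
  have e1 : factorAt u (t-1) (n+1+1) = u (t-1) :: factorAt u (t-1+1) (n+1) :=
    factorAt_succ_left _ _
  have ht : t - 1 + 1 = t := by omega
  rw [ht] at e1
  have e2 : factorAt u t (n+1) = factorAt u t n ++ [u (t+n)] := factorAt_succ_right _ _
  have e3 : factorAt u t n = factorAt u o n := factorAt_eq_iff.2 h
  rw [show n+2 = n+1+1 from rfl, e1, e2, e3]

lemma eboth_of_fOcc {o n t : ℕ} (h : fOcc u o n t) (h1 : 1 ≤ t) :
    (u (t-1), u (t+n)) ∈ Eboth u (factorAt u o n) := by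
  show u (t-1) :: (factorAt u o n ++ [u (t+n)]) ∈ Lang u
  rw [← list_eq_factorAt_cons_append h h1]
  exact factorAt_mem_lang _ _

lemma eboth_of_rOcc (hclosed : ClosedUnderReversal u) {o n t : ℕ}
    (h : rOcc u o n t) (h1 : 1 ≤ t) :
    (u (t+n), u (t-1)) ∈ Eboth u (factorAt u o n) := by
  show u (t+n) :: (factorAt u o n ++ [u (t-1)]) ∈ Lang u
  have mem := hclosed _ (factorAt_mem_lang (u := u) (t-1) (n+2))
  have e1 : factorAt u (t-1) (n+2) = u (t-1) :: (factorAt u t n ++ [u (t+n)]) :=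
    list_eq_factorAt_cons_append (fOcc_refl t n) h1
  have e2 : (factorAt u t n).reverse = factorAt u o n := reverse_factorAt_eq h
  rw [e1] at mem
  simpa [e2] using mem

lemma tail_factorAt (i n : ℕ) : (factorAt u i n).tail = factorAt u (i+1) (n-1) := by
  rcases n with _ | m
  · simp [factorAt]
  · rw [factorAt_succ_left]; simp

lemma dropLast_factorAt (i n : ℕ) : (factorAt u i n).dropLast = factorAt u i (n-1) := by
  rcases n with _ | m
  · simp [factorAt]
  · rw [factorAt_succ_right]
    simp

lemma lang_tail {l : List A} (h : l ∈ Lang u) : l.tail ∈ Lang u := by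
  obtain ⟨i, hi⟩ := h
  rw [hi, tail_factorAt]
  exact factorAt_mem_lang _ _

lemma lang_dropLast {l : List A} (h : l ∈ Lang u) : l.dropLast ∈ Lang u := by
  obtain ⟨i, hi⟩ := h
  rw [hi, dropLast_factorAt]
  exact factorAt_mem_lang _ _

lemma eplus_of_eboth {q : List A} {a b : A} (h : (a, b) ∈ Eboth u q) : b ∈ Eplus u q := by
  have := lang_tail (u := u) h
  simpa [Eplus] using this

lemma eminus_of_eboth {q : List A} {a b : A} (h : (a, b) ∈ Eboth u q) : a ∈ Eminus u q := by
  have h' : (a :: (q ++ [b])) ∈ Lang u := h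
  have := lang_dropLast (u := u) h'
  rw [show a :: (q ++ [b]) = (a :: q) ++ [b] by simp, List.dropLast_concat] at this
  exact this

/-- the central graph-theoretic lemma: two edges from `x` to distinct `a b` plus a
walk from `a` to `b` avoiding `x` yields a cycle. -/
lemma not_isAcyclic {V : Type*} (G : SimpleGraph V) {x a b : V}
    (hxa : G.Adj x a) (hxb : G.Adj x b) (hab : a ≠ b)
    (W : G.Walk a b) (hx : x ∉ W.support) : ¬ G.IsAcyclic := by
  intro hG
  haveI := Classical.decEq V
  set P := W.bypass with hPdef
  have hP : P.IsPath := W.bypass_isPath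
  have hxP : x ∉ P.support := fun h => hx (W.support_bypass_subset h)
  have hPc : (P.concat hxb.symm).IsPath := by
    rw [← SimpleGraph.Walk.isPath_reverse_iff, SimpleGraph.Walk.reverse_concat]
    exact (hP.reverse).cons (by simp [SimpleGraph.Walk.support_reverse, hxP])
  have hcyc : (SimpleGraph.Walk.cons hxa (P.concat hxb.symm)).IsCycle := by
    rw [SimpleGraph.Walk.cons_isCycle_iff]
    refine ⟨hPc, ?_⟩
    rw [SimpleGraph.Walk.edges_concat]
    intro hmem
    rw [List.concat_eq_append] at hmem
    rcases List.mem_append.mp hmem with hmem | hmem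
    · exact hxP (SimpleGraph.Walk.fst_mem_support_of_mem_edges P hmem)
    · simp only [List.mem_singleton, Sym2.eq, Sym2.rel_iff', Prod.mk.injEq, Prod.swap_prod_mk] at hmem
      rcases hmem with ⟨h1, h2⟩ | ⟨h1, h2⟩
      · exact G.irrefl (h2 ▸ hxa)
      · exact hab h2
  exact hG _ hcyc

end ZDCProof
namespace ZDCProof
open ZDC

variable {A : Type*} {u : ℕ → A}

lemma eminus_next_of_pal (hclosed : ClosedUnderReversal u) {o1 n t : ℕ}
    (hpal : palAt u o1 n) (h : fOcc u o1 n t) :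
    u (t+n) ∈ Eminus u (factorAt u o1 n) := by
  show u (t+n) :: factorAt u o1 n ∈ Lang u
  have mem := hclosed _ (factorAt_mem_lang (u := u) t (n+1))
  rw [factorAt_succ_right, List.reverse_append, List.reverse_singleton,
    reverse_factorAt_eq (rOcc_of_fOcc_palAt hpal h)] at mem
  simpa using mem

lemma theta_adj {q : List A} {α β : A} (hne : α ≠ β) (h : (α, β) ∈ Eboth u q)
    (hm1 : α ∈ Eminus u q) (hm2 : β ∈ Eminus u q) :
    (ThetaGraph u q).Adj ⟨α, hm1⟩ ⟨β, hm2⟩ := by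
  rw [ThetaGraph, SimpleGraph.fromRel_adj]
  exact ⟨fun hc => hne (congrArg Subtype.val hc), Or.inl h⟩

lemma chainTheta (hclosed : ClosedUnderReversal u) {o1 n : ℕ} (hpal : palAt u o1 n) (x : A) :
    ∀ (d S S' : ℕ), S' - S = d → S ≤ S' → 1 ≤ S →
    fOcc u o1 n S → fOcc u o1 n S' →
    (∀ t t', S ≤ t → t < t' → t' ≤ S' → fOcc u o1 n t → fOcc u o1 n t' →
      (∀ s, t < s → s < t' → ¬ fOcc u o1 n s) → u (t+n) = u (t'-1)) →
    (∀ t, S ≤ t → t ≤ S' → fOcc u o1 n t → u (t+n) ≠ x) →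
    ∃ (h1 : u (S+n) ∈ Eminus u (factorAt u o1 n))
      (h2 : u (S'+n) ∈ Eminus u (factorAt u o1 n))
      (W : (ThetaGraph u (factorAt u o1 n)).Walk ⟨u (S+n), h1⟩ ⟨u (S'+n), h2⟩),
      ∀ v ∈ W.support, (v : A) ≠ x := by
  intro d
  induction d using Nat.strong_induction_on with
  | _ d IH =>
    intro S S' hd hSS hS1 hQS hQS' hweld hnx
    by_cases hEq : S = S'
    · subst hEq
      refine ⟨eminus_next_of_pal hclosed hpal hQS, eminus_next_of_pal hclosed hpal hQS,
        SimpleGraph.Walk.nil, ?_⟩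
      intro v hv
      simp only [SimpleGraph.Walk.support_nil, List.mem_singleton] at hv
      subst hv
      exact hnx S le_rfl le_rfl hQS
    · have hlt : S < S' := lt_of_le_of_ne hSS hEq
      haveI : DecidablePred (fun t => S ≤ t ∧ fOcc u o1 n t) := Classical.decPred _
      set T' := Nat.findGreatest (fun t => S ≤ t ∧ fOcc u o1 n t) (S'-1) with hT'def
      have hspec : S ≤ T' ∧ fOcc u o1 n T' :=
        Nat.findGreatest_spec (P := fun t => S ≤ t ∧ fOcc u o1 n t) (m := S) (n := S'-1)
          (by omega) ⟨le_rfl, hQS⟩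
      have hT'le : T' ≤ S' - 1 := Nat.findGreatest_le _
      have hadj : ∀ s, T' < s → s < S' → ¬ fOcc u o1 n s := by
        intro s h1 h2 hQs
        exact Nat.findGreatest_is_greatest h1 (by omega) ⟨by omega, hQs⟩
      have hweldTS : u (T'+n) = u (S'-1) :=
        hweld T' S' hspec.1 (by omega) le_rfl hspec.2 hQS' hadj
      obtain ⟨h1, h2, W1, hW1⟩ := IH (T' - S) (by omega) S T' rfl hspec.1 hS1 hQS hspec.2
        (fun t t' a1 a2 a3 b1 b2 b3 => hweld t t' a1 a2 (by omega) b1 b2 b3)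
        (fun t c1 c2 c3 => hnx t c1 (by omega) c3)
      have hmS' : u (S'+n) ∈ Eminus u (factorAt u o1 n) :=
        eminus_next_of_pal hclosed hpal hQS'
      by_cases hstall : u (T'+n) = u (S'+n)
      · refine ⟨h1, hmS', W1.copy rfl (by rw [Subtype.mk_eq_mk]; exact hstall), ?_⟩
        intro v hv
        rw [SimpleGraph.Walk.support_copy] at hv
        exact hW1 v hv
      · have hEb : (u (T'+n), u (S'+n)) ∈ Eboth u (factorAt u o1 n) := by
          rw [hweldTS]
          exact eboth_of_fOcc hQS' (by omega)
        have hadj2 : (ThetaGraph u (factorAt u o1 n)).Adj ⟨u (T'+n), h2⟩ ⟨u (S'+n), hmS'⟩ :=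
          theta_adj hstall hEb h2 hmS'
        refine ⟨h1, hmS', W1.concat hadj2, ?_⟩
        intro v hv
        rw [SimpleGraph.Walk.support_concat] at hv
        rcases List.mem_append.mp hv with hv | hv
        · exact hW1 v hv
        · simp only [List.mem_singleton] at hv
          subst hv
          exact hnx S' (by omega) le_rfl hQS'

end ZDCProof
namespace ZDCProof
open ZDC

variable {A : Type*} {u : ℕ → A}

lemma eplus_next_of_fOcc {o1 n t : ℕ} (h : fOcc u o1 n t) :
    u (t+n) ∈ Eplus u (factorAt u o1 n) := by
  show factorAt u o1 n ++ [u (t+n)] ∈ Lang u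
  have : factorAt u t (n+1) = factorAt u o1 n ++ [u (t+n)] := by
    rw [factorAt_succ_right, factorAt_eq_iff.2 h]
  rw [← this]
  exact factorAt_mem_lang _ _

lemma eminus_next_of_rOcc (hclosed : ClosedUnderReversal u) {o1 n t : ℕ}
    (h : rOcc u o1 n t) :
    u (t+n) ∈ Eminus u (factorAt u o1 n) := by
  show u (t+n) :: factorAt u o1 n ∈ Lang u
  have mem := hclosed _ (factorAt_mem_lang (u := u) t (n+1))
  rw [factorAt_succ_right, List.reverse_append, List.reverse_singleton,
    reverse_factorAt_eq h] at mem
  simpa using mem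

lemma gamma_adj {q : List A} {α β : A} (h : (α, β) ∈ Eboth u q)
    (hm1 : α ∈ Eminus u q) (hm2 : β ∈ Eplus u q) :
    (GammaGraph u q).Adj (Sum.inl ⟨α, hm1⟩) (Sum.inr ⟨β, hm2⟩) := by
  rw [GammaGraph, SimpleGraph.fromRel_adj]
  exact ⟨by simp, Or.inl ⟨⟨α, hm1⟩, ⟨β, hm2⟩, rfl, rfl, h⟩⟩

lemma chainGamma (hclosed : ClosedUnderReversal u) {o1 n : ℕ} (hnp : ¬ palAt u o1 n) (x : A) :
    ∀ (d S S' : ℕ), S' - S = d → S ≤ S' → 1 ≤ S →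
    fOcc u o1 n S → (fOcc u o1 n S' ∨ rOcc u o1 n S') →
    (∀ t t', S ≤ t → t < t' → t' ≤ S' →
      ((fOcc u o1 n t ∧ rOcc u o1 n t') ∨ (rOcc u o1 n t ∧ fOcc u o1 n t')) →
      (∀ s, t < s → s < t' → ¬(fOcc u o1 n s ∨ rOcc u o1 n s)) → u (t+n) = u (t'-1)) →
    (∀ t t', S ≤ t → t < t' → t' ≤ S' →
      ((fOcc u o1 n t ∧ fOcc u o1 n t') ∨ (rOcc u o1 n t ∧ rOcc u o1 n t')) →
      (∀ s, t < s → s < t' → ¬(fOcc u o1 n s ∨ rOcc u o1 n s)) → False) →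
    (∀ t, S ≤ t → t ≤ S' → rOcc u o1 n t → u (t+n) ≠ x) →
    ∃ (hS : u (S+n) ∈ Eplus u (factorAt u o1 n)),
      (∀ _ : fOcc u o1 n S', ∃ (h2 : u (S'+n) ∈ Eplus u (factorAt u o1 n))
        (W : (GammaGraph u (factorAt u o1 n)).Walk
          (Sum.inr ⟨u (S+n), hS⟩) (Sum.inr ⟨u (S'+n), h2⟩)),
        ∀ hxm : x ∈ Eminus u (factorAt u o1 n), Sum.inl ⟨x, hxm⟩ ∉ W.support) ∧
      (∀ _ : rOcc u o1 n S', ∃ (h2 : u (S'+n) ∈ Eminus u (factorAt u o1 n))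
        (W : (GammaGraph u (factorAt u o1 n)).Walk
          (Sum.inr ⟨u (S+n), hS⟩) (Sum.inl ⟨u (S'+n), h2⟩)),
        ∀ hxm : x ∈ Eminus u (factorAt u o1 n), Sum.inl ⟨x, hxm⟩ ∉ W.support) := by
  intro d
  induction d using Nat.strong_induction_on with
  | _ d IH =>
    intro S S' hd hSS hS1 hQS hE hweld hsame hRx
    refine ⟨eplus_next_of_fOcc hQS, ?_, ?_⟩
    · -- S' is a Q-occurrence
      intro hQ'
      by_cases hEq : S = S'
      · subst hEq
        refine ⟨eplus_next_of_fOcc hQS, SimpleGraph.Walk.nil, ?_⟩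
        intro hxm hmem
        simp only [SimpleGraph.Walk.support_nil, List.mem_singleton] at hmem
        exact absurd hmem (by simp)
      · have hlt : S < S' := lt_of_le_of_ne hSS hEq
        haveI : DecidablePred (fun t => S ≤ t ∧ (fOcc u o1 n t ∨ rOcc u o1 n t)) :=
          Classical.decPred _
        set T' := Nat.findGreatest (fun t => S ≤ t ∧ (fOcc u o1 n t ∨ rOcc u o1 n t)) (S'-1)
          with hT'def
        have hspec : S ≤ T' ∧ (fOcc u o1 n T' ∨ rOcc u o1 n T') :=
          Nat.findGreatest_spec (P := fun t => S ≤ t ∧ (fOcc u o1 n t ∨ rOcc u o1 n t))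
            (m := S) (n := S'-1) (by omega) ⟨le_rfl, Or.inl hQS⟩
        have hT'le : T' ≤ S' - 1 := Nat.findGreatest_le _
        have hadj : ∀ s, T' < s → s < S' → ¬ (fOcc u o1 n s ∨ rOcc u o1 n s) := by
          intro s h1 h2 hs
          exact Nat.findGreatest_is_greatest h1 (by omega) ⟨by omega, hs⟩
        have hRT' : rOcc u o1 n T' := by
          rcases hspec.2 with hQ | hR
          · exact absurd (hsame T' S' hspec.1 (by omega) le_rfl (Or.inl ⟨hQ, hQ'⟩) hadj) id
          · exact hR
        obtain ⟨hS0, _, IHR⟩ := IH (T' - S) (by omega) S T' rfl hspec.1 hS1 hQS hspec.2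
          (fun t t' a1 a2 a3 b1 b2 => hweld t t' a1 a2 (by omega) b1 b2)
          (fun t t' a1 a2 a3 b1 b2 => hsame t t' a1 a2 (by omega) b1 b2)
          (fun t c1 c2 c3 => hRx t c1 (by omega) c3)
        obtain ⟨h2, W1, hW1⟩ := IHR hRT'
        have hweldTS : u (T'+n) = u (S'-1) :=
          hweld T' S' hspec.1 (by omega) le_rfl (Or.inr ⟨hRT', hQ'⟩) hadj
        have hEb : (u (T'+n), u (S'+n)) ∈ Eboth u (factorAt u o1 n) := by
          rw [hweldTS]
          exact eboth_of_fOcc hQ' (by omega)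
        have hplus : u (S'+n) ∈ Eplus u (factorAt u o1 n) := eplus_next_of_fOcc hQ'
        have hadj2 := gamma_adj hEb h2 hplus
        refine ⟨hplus, W1.concat hadj2, ?_⟩
        intro hxm hmem
        rw [SimpleGraph.Walk.support_concat] at hmem
        rcases List.mem_append.mp hmem with hv | hv
        · exact hW1 hxm hv
        · simp at hv
    · -- S' is an R-occurrence
      intro hR'
      by_cases hEq : S = S'
      · subst hEq
        exact absurd (palAt_of_fOcc_rOcc hQS hR') hnp
      · have hlt : S < S' := lt_of_le_of_ne hSS hEq
        haveI : DecidablePred (fun t => S ≤ t ∧ (fOcc u o1 n t ∨ rOcc u o1 n t)) :=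
          Classical.decPred _
        set T' := Nat.findGreatest (fun t => S ≤ t ∧ (fOcc u o1 n t ∨ rOcc u o1 n t)) (S'-1)
          with hT'def
        have hspec : S ≤ T' ∧ (fOcc u o1 n T' ∨ rOcc u o1 n T') :=
          Nat.findGreatest_spec (P := fun t => S ≤ t ∧ (fOcc u o1 n t ∨ rOcc u o1 n t))
            (m := S) (n := S'-1) (by omega) ⟨le_rfl, Or.inl hQS⟩
        have hT'le : T' ≤ S' - 1 := Nat.findGreatest_le _
        have hadj : ∀ s, T' < s → s < S' → ¬ (fOcc u o1 n s ∨ rOcc u o1 n s) := by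
          intro s h1 h2 hs
          exact Nat.findGreatest_is_greatest h1 (by omega) ⟨by omega, hs⟩
        have hQT' : fOcc u o1 n T' := by
          rcases hspec.2 with hQ | hR
          · exact hQ
          · exact absurd (hsame T' S' hspec.1 (by omega) le_rfl (Or.inr ⟨hR, hR'⟩) hadj) id
        obtain ⟨hS0, IHQ, _⟩ := IH (T' - S) (by omega) S T' rfl hspec.1 hS1 hQS hspec.2
          (fun t t' a1 a2 a3 b1 b2 => hweld t t' a1 a2 (by omega) b1 b2)
          (fun t t' a1 a2 a3 b1 b2 => hsame t t' a1 a2 (by omega) b1 b2)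
          (fun t c1 c2 c3 => hRx t c1 (by omega) c3)
        obtain ⟨h2, W1, hW1⟩ := IHQ hQT'
        have hweldTS : u (T'+n) = u (S'-1) :=
          hweld T' S' hspec.1 (by omega) le_rfl (Or.inl ⟨hQT', hR'⟩) hadj
        have hEb : (u (S'+n), u (T'+n)) ∈ Eboth u (factorAt u o1 n) := by
          rw [hweldTS]
          exact eboth_of_rOcc hclosed hR' (by omega)
        have hminus : u (S'+n) ∈ Eminus u (factorAt u o1 n) :=
          eminus_next_of_rOcc hclosed hR'
        have hadj2 := (gamma_adj hEb hminus h2).symm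
        refine ⟨hminus, W1.concat hadj2, ?_⟩
        intro hxm hmem
        rw [SimpleGraph.Walk.support_concat] at hmem
        rcases List.mem_append.mp hmem with hv | hv
        · exact hW1 hxm hv
        · simp only [List.mem_singleton, Sum.inl.injEq, Subtype.mk.injEq] at hv
          exact hRx S' (by omega) le_rfl hR' hv.symm

end ZDCProof
namespace ZDCProof
open ZDC

variable {A : Type*} {u : ℕ → A}

/-- kind-a witness: a non-palindromic complete mirror return.
`u[o..o+L)` begins with `w = u[o..o+W)`, ends with the reversal of `w`, has no
occurrence of `w` nor of its reversal strictly inside, and is not a palindrome. -/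
def KindA (u : ℕ → A) (o W L : ℕ) : Prop :=
  1 ≤ W ∧ W ≤ L ∧
  (∀ i < W, u (o+(L-W)+i) = u (o+(W-1-i))) ∧
  (∀ t, o+1 ≤ t → t+W+1 ≤ o+L → ¬ fOcc u o W t) ∧
  (∀ t, o+1 ≤ t → t+W+1 ≤ o+L → ¬ rOcc u o W t) ∧
  ¬ palAt u o L

/-- kind-b witness: an alternation failure. `u[o..o+L)` begins and ends with the
non-palindromic `w = u[o..o+W)`, with no `w` strictly inside and no reversal of `w`
anywhere in the window. -/
def KindB (u : ℕ → A) (o W L : ℕ) : Prop :=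
  1 ≤ W ∧ W + 1 ≤ L ∧
  ¬ palAt u o W ∧
  fOcc u o W (o+(L-W)) ∧
  (∀ t, o+1 ≤ t → t+W+1 ≤ o+L → ¬ fOcc u o W t) ∧
  (∀ t, o ≤ t → t+W ≤ o+L → ¬ rOcc u o W t)

lemma overlap_pal {o W L : ℕ} (hWL : W ≤ L) (hL : L ≤ 2*W+1)
    (SR : ∀ i < W, u (o+(L-W)+i) = u (o+(W-1-i))) : palAt u o L := by
  have key : ∀ i < W, u (o+(L-1-i)) = u (o+i) := by
    intro i hi
    rw [show L-1-i = (L-W) + (W-1-i) by omega, ← Nat.add_assoc, SR (W-1-i) (by omega)]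
    congr 1
    omega
  intro k hk
  by_cases hkW : k < W
  · exact (key k hkW).symm
  · by_cases h3 : L-1-k < W
    · have := key (L-1-k) h3
      rw [show L-1-(L-1-k) = k by omega] at this
      exact this
    · have : L-1-k = k := by omega
      rw [this]

lemma palAt_small {o n : ℕ} (hn : n ≤ 1) : palAt u o n := by
  intro i hi
  have : i = 0 ∧ n = 1 := by omega
  rw [this.1, this.2]

lemma palAt_transfer_f {o n t : ℕ} (h : fOcc u o n t) (hp : palAt u t n) : palAt u o n := by
  intro i hi
  rw [← h i hi, hp i hi, h (n-1-i) (by omega)]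

lemma palAt_transfer_r {o n t : ℕ} (h : rOcc u o n t) (hp : palAt u t n) : palAt u o n := by
  intro i hi
  have h1 := h i hi
  have h2 := h (n-1-i) (by omega)
  rw [show n-1-(n-1-i) = i by omega] at h2
  rw [← h2, ← hp i hi, h1]

/-- transfers of occurrences along occurrences -/
lemma fOcc_of_f_f {o n t s : ℕ} (h : fOcc u o n t) (h2 : fOcc u t n s) : fOcc u o n s :=
  fun i hi => (h2 i hi).trans (h i hi)

lemma rOcc_of_f_r {o n t s : ℕ} (h : fOcc u o n t) (h2 : rOcc u t n s) : rOcc u o n s :=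
  fun i hi => (h2 i hi).trans (h (n-1-i) (by omega))

lemma rOcc_of_r_f {o n t s : ℕ} (h : rOcc u o n t) (h2 : fOcc u t n s) : rOcc u o n s :=
  fun i hi => (h2 i hi).trans (h i hi)

lemma fOcc_of_r_r {o n t s : ℕ} (h : rOcc u o n t) (h2 : rOcc u t n s) : fOcc u o n s := by
  intro i hi
  have := (h2 i hi).trans (h (n-1-i) (by omega))
  rwa [show n-1-(n-1-i) = i by omega] at this

/-- converse transfers: an occurrence of the base word within a copy -/
lemma fOcc_local_of_f {o n t s : ℕ} (h : fOcc u o n t) (h2 : fOcc u o n s) : fOcc u t n s :=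
  fun i hi => (h2 i hi).trans (h i hi).symm

lemma rOcc_local_of_f {o n t s : ℕ} (h : fOcc u o n t) (h2 : rOcc u o n s) : rOcc u t n s :=
  fun i hi => (h2 i hi).trans (h (n-1-i) (by omega)).symm

lemma fOcc_local_of_r {o n t s : ℕ} (h : rOcc u o n t) (h2 : rOcc u o n s) : fOcc u t n s := by
  intro i hi
  rw [h2 i hi, ← h i hi]

lemma rOcc_local_of_r {o n t s : ℕ} (h : rOcc u o n t) (h2 : fOcc u o n s) : rOcc u t n s := by
  intro i hi
  rw [h2 i hi, h (n-1-i) (by omega)]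
  congr 1
  omega

/-- the key welding equality between adjacent occurrences, from the induction hypothesis -/
lemma segment_weld {t t' n : ℕ} (hn : 1 ≤ n) (hlt : t < t')
    (hSR : ∀ i < n, u (t'+i) = u (t+(n-1-i)))
    (hint1 : ∀ s, t+1 ≤ s → s+n+1 ≤ t'+n → ¬ fOcc u t n s)
    (hint2 : ∀ s, t+1 ≤ s → s+n+1 ≤ t'+n → ¬ rOcc u t n s)
    (hno : ¬ KindA u t n (t'-t+n)) :
    u (t+n) = u (t'-1) := by
  have hpal : palAt u t (t'-t+n) := by
    by_contra hp
    apply hno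
    refine ⟨hn, by omega, ?_, ?_, ?_, hp⟩
    · intro i hi
      rw [show t + (t'-t+n-n) + i = t' + i by omega]
      exact hSR i hi
    · intro s h1 h2
      exact hint1 s h1 (by omega)
    · intro s h1 h2
      exact hint2 s h1 (by omega)
  have := hpal n (by omega)
  rwa [show t + (t'-t+n-1-n) = t'-1 by omega] at this

lemma gap_false {t t' n : ℕ} (hn : 1 ≤ n) (hlt : t < t')
    (hnp' : ¬ palAt u t n)
    (hocc : fOcc u t n t')
    (hint1 : ∀ s, t+1 ≤ s → s+n+1 ≤ t'+n → ¬ fOcc u t n s)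
    (hint2 : ∀ s, t ≤ s → s+n ≤ t'+n → ¬ rOcc u t n s)
    (hno : ¬ KindB u t n (t'-t+n)) : False := by
  apply hno
  refine ⟨hn, by omega, hnp', ?_, ?_, ?_⟩
  · rw [show t + (t'-t+n-n) = t' by omega]
    exact hocc
  · intro s h1 h2
    exact hint1 s h1 (by omega)
  · intro s h1 h2
    exact hint2 s h1 (by omega)

lemma factorAt_one (t : ℕ) : factorAt u t 1 = [u t] := by
  simp [factorAt, List.range_succ]

lemma occursAt_singleton {x : A} {t : ℕ} : OccursAt u [x] t ↔ u t = x := by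
  rw [OccursAt, List.length_singleton, factorAt_one]
  constructor
  · intro h
    exact (List.singleton_injective h).symm
  · intro h
    rw [h]

end ZDCProof
namespace ZDCProof
open ZDC

variable {A : Type*} {u : ℕ → A}

lemma theta_adj' {q : List A} {α β : A} (hne : α ≠ β) (h : (β, α) ∈ Eboth u q)
    (hm1 : α ∈ Eminus u q) (hm2 : β ∈ Eminus u q) :
    (ThetaGraph u q).Adj ⟨α, hm1⟩ ⟨β, hm2⟩ := by
  rw [ThetaGraph, SimpleGraph.fromRel_adj]
  exact ⟨fun hc => hne (congrArg Subtype.val hc), Or.inr h⟩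

theorem master (hclosed : ClosedUnderReversal u)
    (HΓ : ∀ o' n', ¬ palAt u o' n' → (GammaGraph u (factorAt u o' n')).IsAcyclic)
    (HΘ : ∀ o' n', 1 ≤ n' → palAt u o' n' → (ThetaGraph u (factorAt u o' n')).IsAcyclic)
    (Hnil : (ThetaGraph u ([] : List A)).IsAcyclic ∨
      (∀ (a : A) (r : List A), IsCompleteReturn u [a] r → r.reverse = r)) :
    ∀ (m W o L : ℕ), L - W = m → ¬ KindA u o W L ∧ ¬ KindB u o W L := by
  intro m
  induction m using Nat.strong_induction_on with
  | _ m IH1 =>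
  intro W
  induction W using Nat.strong_induction_on with
  | _ W IH2 =>
  intro o L hm
  have noWit : ∀ o' W' L', (L' - W' < m ∨ (L' - W' = m ∧ W' < W)) →
      ¬ KindA u o' W' L' ∧ ¬ KindB u o' W' L' := by
    rintro o' W' L' (h | ⟨h1, h2⟩)
    · exact IH1 _ h W' o' L' rfl
    · exact IH2 W' h2 o' L' h1
  constructor
  · -- ============ kind A ============
    rintro ⟨hW1, hWL, SR, int1, int2, npal⟩
    have hL2 : 2*W + 2 ≤ L := by
      by_contra h
      exact npal (overlap_pal hWL (by omega) SR)
    by_cases hab : u (o+W) = u (o+(L-W-1))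
    · -- extension step
      apply (noWit o (W+1) L (Or.inl (by omega))).1
      refine ⟨by omega, by omega, ?_, ?_, ?_, npal⟩
      · intro i hi
        rcases i with _ | i
        · rw [Nat.add_zero, show L-(W+1) = L-W-1 by omega, show W+1-1-0 = W by omega]
          exact hab.symm
        · rw [show o+(L-(W+1))+(i+1) = o+(L-W)+i by omega, SR i (by omega)]
          congr 1
          omega
      · intro t h1 h2 hOcc
        exact int1 t h1 (by omega) (fun i hi => hOcc i (by omega))
      · intro t h1 h2 hOcc
        apply int2 (t+1) (by omega) (by omega)
        intro i hi
        have := hOcc (i+1) (by omega)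
        rw [show t+1+i = t+(i+1) by omega, this]
        congr 1
        omega
    · -- main case
      set n := W - 1 with hndef
      have hWn : W = n + 1 := by omega
      have hQ0 : fOcc u (o+1) n (o+1) := fOcc_refl _ _
      have hRT1 : rOcc u (o+1) n (o+(L-W)) := by
        intro i hi
        rw [SR i (by omega)]
        congr 1
        omega
      have hxT1 : u (o+(L-W)+n) = u o := by
        have := SR (W-1) (by omega)
        rw [show o+(L-W)+n = o+(L-W)+(W-1) by omega, this, show W-1-(W-1) = 0 by omega,
          Nat.add_zero]
      have haT0 : u (o+1+n) = u (o+W) := by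
        congr 1
        omega
      have F1 : ∀ t, o+1 < t → t ≤ o+(L-W) → fOcc u (o+1) n t → u (t-1) ≠ u o := by
        intro t h1 h2 hQ hx
        apply int1 (t-1) (by omega) (by omega)
        intro i hi
        rcases i with _ | i
        · rw [Nat.add_zero, Nat.add_zero]
          exact hx
        · rw [show t-1+(i+1) = t+i by omega, hQ i (by omega)]
          congr 1
          omega
      have F2 : ∀ t, o+1 ≤ t → t < o+(L-W) → rOcc u (o+1) n t → u (t+n) ≠ u o := by
        intro t h1 h2 hR hx
        apply int2 t h1 (by omega)
        intro i hi
        by_cases hiW : i < n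
        · rw [hR i hiW]
          congr 1
          omega
        · have hin : i = n := by omega
          subst hin
          rw [hx, show W-1-n = 0 by omega, Nat.add_zero]
      have hxm : u o ∈ Eminus u (factorAt u (o+1) n) := by
        show u o :: factorAt u (o+1) n ∈ Lang u
        rw [← factorAt_succ_left]
        exact factorAt_mem_lang _ _
      have hEb0 : (u o, u (o+1+n)) ∈ Eboth u (factorAt u (o+1) n) := by
        have := eboth_of_fOcc hQ0 (show 1 ≤ o+1 by omega)
        rwa [show o+1-1 = o by omega] at this
      by_cases hpal : palAt u (o+1) n
      · -- ===== Theta case =====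
        have weldQ : ∀ t t', o+1 ≤ t → t < t' → t' ≤ o+(L-W) →
            fOcc u (o+1) n t → fOcc u (o+1) n t' →
            (∀ s, t < s → s < t' → ¬ fOcc u (o+1) n s) → u (t+n) = u (t'-1) := by
          intro t t' h1 h2 h3 hQt hQt' hadjQ
          rcases Nat.eq_zero_or_pos n with hn0 | hn1
          · have ht' : t' = t+1 := by
              by_contra hne
              exact hadjQ (t+1) (by omega) (by omega) (fun i hi => by omega)
            rw [hn0, Nat.add_zero, ht', Nat.add_sub_cancel]
          · apply segment_weld hn1 h2 ?_ ?_ ?_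
              (noWit t n (t'-t+n) (Or.inl (by omega))).1
            · intro i hi
              rw [hQt' i hi, hpal i hi, ← hQt (n-1-i) (by omega)]
            · intro s hs1 hs2 hOcc
              exact hadjQ s (by omega) (by omega) (fOcc_of_f_f hQt hOcc)
            · intro s hs1 hs2 hOcc
              exact hadjQ s (by omega) (by omega)
                (fOcc_of_rOcc_palAt hpal (rOcc_of_f_r hQt hOcc))
        haveI : DecidablePred (fun t => o+1 ≤ t ∧ fOcc u (o+1) n t) := Classical.decPred _
        set T1' := Nat.findGreatest (fun t => o+1 ≤ t ∧ fOcc u (o+1) n t) (o+(L-W)-1)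
          with hT1'def
        have hspec : o+1 ≤ T1' ∧ fOcc u (o+1) n T1' :=
          Nat.findGreatest_spec (P := fun t => o+1 ≤ t ∧ fOcc u (o+1) n t)
            (m := o+1) (n := o+(L-W)-1) (by omega) ⟨le_rfl, hQ0⟩
        have hT1'le : T1' ≤ o+(L-W)-1 := Nat.findGreatest_le _
        have hadjT : ∀ s, T1' < s → s < o+(L-W) → ¬ fOcc u (o+1) n s := by
          intro s h1 h2 h3
          exact Nat.findGreatest_is_greatest h1 (by omega) ⟨by omega, h3⟩
        have hQT1 : fOcc u (o+1) n (o+(L-W)) := fOcc_of_rOcc_palAt hpal hRT1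
        have weldLast : u (T1'+n) = u (o+(L-W)-1) :=
          weldQ T1' (o+(L-W)) hspec.1 (by omega) le_rfl hspec.2 hQT1 hadjT
        obtain ⟨h1, h2, W1, hW1⟩ := chainTheta hclosed hpal (u o) (T1' - (o+1)) (o+1) T1'
          rfl hspec.1 (by omega) hQ0 hspec.2
          (fun t t' a1 a2 a3 b1 b2 b3 => weldQ t t' a1 a2 (by omega) b1 b2 b3)
          (fun t c1 c2 c3 => F2 t c1 (by omega) (rOcc_of_fOcc_palAt hpal c3))
        have hax : u (o+1+n) ≠ u o := F2 (o+1) le_rfl (by omega) (rOcc_of_fOcc_palAt hpal hQ0)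
        have hbx : u (o+(L-W)-1) ≠ u o := F1 (o+(L-W)) (by omega) le_rfl hQT1
        have adj1 : (ThetaGraph u (factorAt u (o+1) n)).Adj ⟨u o, hxm⟩ ⟨u (o+1+n), h1⟩ :=
          theta_adj (fun h => hax h.symm) hEb0 hxm h1
        have hEb2 : (u (T1'+n), u o) ∈ Eboth u (factorAt u (o+1) n) := by
          rw [weldLast]
          have := eboth_of_fOcc hQT1 (by omega)
          rwa [hxT1] at this
        have adj2 : (ThetaGraph u (factorAt u (o+1) n)).Adj ⟨u o, hxm⟩ ⟨u (T1'+n), h2⟩ :=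
          theta_adj' (fun h => hbx (weldLast ▸ h.symm)) hEb2 hxm h2
        have hne12 : (⟨u (o+1+n), h1⟩ : ↥(Eminus u (factorAt u (o+1) n))) ≠ ⟨u (T1'+n), h2⟩ := by
          intro h
          apply hab
          have hv := congrArg Subtype.val h
          simp only at hv
          rw [← haT0, hv, weldLast]
          congr 1
          omega
        have hnot := not_isAcyclic _ adj1 adj2 hne12 W1 (fun hs => (hW1 _ hs) rfl)
        rcases Nat.eq_zero_or_pos n with hn0 | hn1
        · have hqnil : factorAt u (o+1) n = ([] : List A) := by
            rw [hn0]
            rfl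
          rcases Hnil with hac | hret
          · rw [hqnil] at hnot
            exact hnot hac
          · apply absurd (hret (u o) (factorAt u o L) ?_)
            · intro hrev
              exact npal (palAt_of_reverse_eq hrev)
            · have hWone : W = 1 := by omega
              refine ⟨o, o+L-1, by omega, occursAt_singleton.2 rfl, ?_, ?_, ?_⟩
              · apply occursAt_singleton.2
                have h0 := SR 0 (by omega)
                rw [Nat.add_zero] at h0
                rw [show o+L-1 = o+(L-W) by omega, h0, show n-0 = 0 by omega, Nat.add_zero]
              · intro k hk1 hk2 hocc
                apply int1 k (by omega) (by omega)
                intro i hi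
                have hi0 : i = 0 := by omega
                subst hi0
                rw [Nat.add_zero, Nat.add_zero]
                exact occursAt_singleton.1 hocc
              · rw [List.length_singleton]
                congr 1
                omega
        · exact hnot (HΘ (o+1) n hn1 hpal)
      · -- ===== Gamma case =====
        have hn2 : 2 ≤ n := by
          by_contra h
          exact hpal (palAt_small (by omega))
        have weldQR : ∀ t t', o+1 ≤ t → t < t' → t' ≤ o+(L-W) →
            ((fOcc u (o+1) n t ∧ rOcc u (o+1) n t') ∨
             (rOcc u (o+1) n t ∧ fOcc u (o+1) n t')) →
            (∀ s, t < s → s < t' → ¬(fOcc u (o+1) n s ∨ rOcc u (o+1) n s)) →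
            u (t+n) = u (t'-1) := by
          intro t t' h1 h2 h3 hlab hadjQ
          rcases hlab with ⟨hQt, hRt'⟩ | ⟨hRt, hQt'⟩
          · apply segment_weld (by omega) h2 ?_ ?_ ?_
              (noWit t n (t'-t+n) (Or.inl (by omega))).1
            · intro i hi
              rw [hRt' i hi, ← hQt (n-1-i) (by omega)]
            · intro s hs1 hs2 hOcc
              exact hadjQ s (by omega) (by omega) (Or.inl (fOcc_of_f_f hQt hOcc))
            · intro s hs1 hs2 hOcc
              exact hadjQ s (by omega) (by omega) (Or.inr (rOcc_of_f_r hQt hOcc))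
          · apply segment_weld (by omega) h2 ?_ ?_ ?_
              (noWit t n (t'-t+n) (Or.inl (by omega))).1
            · intro i hi
              rw [hQt' i hi, hRt (n-1-i) (by omega), show n-1-(n-1-i) = i by omega]
            · intro s hs1 hs2 hOcc
              exact hadjQ s (by omega) (by omega) (Or.inr (rOcc_of_r_f hRt hOcc))
            · intro s hs1 hs2 hOcc
              exact hadjQ s (by omega) (by omega) (Or.inl (fOcc_of_r_r hRt hOcc))
        have sameFalse : ∀ t t', o+1 ≤ t → t < t' → t' ≤ o+(L-W) →
            ((fOcc u (o+1) n t ∧ fOcc u (o+1) n t') ∨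
             (rOcc u (o+1) n t ∧ rOcc u (o+1) n t')) →
            (∀ s, t < s → s < t' → ¬(fOcc u (o+1) n s ∨ rOcc u (o+1) n s)) → False := by
          intro t t' h1 h2 h3 hlab hadjQ
          rcases hlab with ⟨hQt, hQt'⟩ | ⟨hRt, hRt'⟩
          · apply gap_false (n := n) (by omega) h2
              (fun hp => hpal (palAt_transfer_f hQt hp))
              (fOcc_local_of_f hQt hQt') ?_ ?_
              (noWit t n (t'-t+n) (Or.inl (by omega))).2
            · intro s hs1 hs2 hOcc
              exact hadjQ s (by omega) (by omega) (Or.inl (fOcc_of_f_f hQt hOcc))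
            · intro s hs1 hs2 hOcc
              have hRs : rOcc u (o+1) n s := rOcc_of_f_r hQt hOcc
              rcases Nat.lt_or_ge t s with hts | hts
              · rcases Nat.lt_or_ge s t' with hst | hst
                · exact hadjQ s hts hst (Or.inr hRs)
                · have hst' : s = t' := by omega
                  subst hst'
                  exact hpal (palAt_of_fOcc_rOcc hQt' hRs)
              · have hst : s = t := by omega
                subst hst
                exact hpal (palAt_of_fOcc_rOcc hQt hRs)
          · apply gap_false (n := n) (by omega) h2
              (fun hp => hpal (palAt_transfer_r hRt hp))
              (fOcc_local_of_r hRt hRt') ?_ ?_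
              (noWit t n (t'-t+n) (Or.inl (by omega))).2
            · intro s hs1 hs2 hOcc
              exact hadjQ s (by omega) (by omega) (Or.inr (rOcc_of_r_f hRt hOcc))
            · intro s hs1 hs2 hOcc
              have hQs : fOcc u (o+1) n s := fOcc_of_r_r hRt hOcc
              rcases Nat.lt_or_ge t s with hts | hts
              · rcases Nat.lt_or_ge s t' with hst | hst
                · exact hadjQ s hts hst (Or.inl hQs)
                · have hst' : s = t' := by omega
                  subst hst'
                  exact hpal (palAt_of_fOcc_rOcc hQs hRt')
              · have hst : s = t := by omega
                subst hst
                exact hpal (palAt_of_fOcc_rOcc hQs hRt)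
        haveI : DecidablePred (fun t => o+1 ≤ t ∧ (fOcc u (o+1) n t ∨ rOcc u (o+1) n t)) :=
          Classical.decPred _
        set T1' := Nat.findGreatest
          (fun t => o+1 ≤ t ∧ (fOcc u (o+1) n t ∨ rOcc u (o+1) n t)) (o+(L-W)-1) with hT1'def
        have hspec : o+1 ≤ T1' ∧ (fOcc u (o+1) n T1' ∨ rOcc u (o+1) n T1') :=
          Nat.findGreatest_spec
            (P := fun t => o+1 ≤ t ∧ (fOcc u (o+1) n t ∨ rOcc u (o+1) n t))
            (m := o+1) (n := o+(L-W)-1) (by omega) ⟨le_rfl, Or.inl hQ0⟩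
        have hT1'le : T1' ≤ o+(L-W)-1 := Nat.findGreatest_le _
        have hadjT : ∀ s, T1' < s → s < o+(L-W) → ¬ (fOcc u (o+1) n s ∨ rOcc u (o+1) n s) := by
          intro s h1 h2 h3
          exact Nat.findGreatest_is_greatest h1 (by omega) ⟨by omega, h3⟩
        have hQT1' : fOcc u (o+1) n T1' := by
          rcases hspec.2 with hQ | hR
          · exact hQ
          · exact absurd (sameFalse T1' (o+(L-W)) hspec.1 (by omega) le_rfl
              (Or.inr ⟨hR, hRT1⟩) hadjT) id
        have weldLast : u (T1'+n) = u (o+(L-W)-1) :=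
          weldQR T1' (o+(L-W)) hspec.1 (by omega) le_rfl (Or.inl ⟨hQT1', hRT1⟩) hadjT
        obtain ⟨hS, IHQ, _⟩ := chainGamma hclosed hpal (u o) (T1' - (o+1)) (o+1) T1'
          rfl hspec.1 (by omega) hQ0 (Or.inl hQT1')
          (fun t t' a1 a2 a3 b1 b2 => weldQR t t' a1 a2 (by omega) b1 b2)
          (fun t t' a1 a2 a3 b1 b2 => sameFalse t t' a1 a2 (by omega) b1 b2)
          (fun t c1 c2 c3 => F2 t c1 (by omega) c3)
        obtain ⟨h2, W1, hW1⟩ := IHQ hQT1'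
        have adj1 : (GammaGraph u (factorAt u (o+1) n)).Adj
            (Sum.inl ⟨u o, hxm⟩) (Sum.inr ⟨u (o+1+n), hS⟩) :=
          gamma_adj hEb0 hxm hS
        have hEb2 : (u o, u (T1'+n)) ∈ Eboth u (factorAt u (o+1) n) := by
          rw [weldLast]
          have := eboth_of_rOcc hclosed hRT1 (by omega)
          rwa [hxT1] at this
        have adj2 : (GammaGraph u (factorAt u (o+1) n)).Adj
            (Sum.inl ⟨u o, hxm⟩) (Sum.inr ⟨u (T1'+n), h2⟩) :=
          gamma_adj hEb2 hxm h2
        have hne12 : (Sum.inr ⟨u (o+1+n), hS⟩ :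
              ↥(Eminus u (factorAt u (o+1) n)) ⊕ ↥(Eplus u (factorAt u (o+1) n))) ≠
            Sum.inr ⟨u (T1'+n), h2⟩ := by
          intro h
          apply hab
          have hv := congrArg (fun z => Sum.elim Subtype.val Subtype.val z) h
          simp only [Sum.elim_inr] at hv
          rw [← haT0, hv, weldLast]
          congr 1
          omega
        have hnot := not_isAcyclic _ adj1 adj2 hne12 W1 (hW1 hxm)
        exact hnot (HΓ (o+1) n hpal)
  · -- ============ kind B ============
    rintro ⟨hW1, hL1, hnpw, hocc2, int1, int2⟩
    have hW2 : 2 ≤ W := by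
      by_contra h
      exact hnpw (palAt_small (by omega))
    set n := W - 1 with hndef
    have hn1 : 1 ≤ n := by omega
    have hQ0 : fOcc u (o+1) n (o+1) := fOcc_refl _ _
    have hQEnd : fOcc u (o+1) n (o+(L-W)+1) := by
      intro i hi
      have := hocc2 (i+1) (by omega)
      rw [show o+(L-W)+1+i = o+(L-W)+(i+1) by omega, this]
      congr 1
      omega
    have hxEnd : u (o+(L-W)) = u o := by
      have := hocc2 0 (by omega)
      simpa using this
    haveI : DecidablePred (fun t => o+1 ≤ t ∧ (fOcc u (o+1) n t ∨ rOcc u (o+1) n t)) :=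
      Classical.decPred _
    set ts := Nat.findGreatest
      (fun t => o+1 ≤ t ∧ (fOcc u (o+1) n t ∨ rOcc u (o+1) n t)) (o+(L-W)) with htsdef
    have hspec : o+1 ≤ ts ∧ (fOcc u (o+1) n ts ∨ rOcc u (o+1) n ts) :=
      Nat.findGreatest_spec
        (P := fun t => o+1 ≤ t ∧ (fOcc u (o+1) n t ∨ rOcc u (o+1) n t))
        (m := o+1) (n := o+(L-W)) (by omega) ⟨le_rfl, Or.inl hQ0⟩
    have htsle : ts ≤ o+(L-W) := Nat.findGreatest_le _
    have hadjT : ∀ s, ts < s → s < o+(L-W)+1 → ¬ (fOcc u (o+1) n s ∨ rOcc u (o+1) n s) := by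
      intro s h1 h2 h3
      exact Nat.findGreatest_is_greatest h1 (by omega) ⟨by omega, h3⟩
    have hmeas : (o+(L-W)+1) - ts - n ≤ m ∨ True := Or.inr trivial
    -- final contradiction through `int2` at `ts`
    have final : u (ts+n) = u o → rOcc u (o+1) n ts → False := by
      intro hx hRts
      apply int2 ts (by omega) (by omega)
      intro i hi
      by_cases hiW : i < n
      · rw [hRts i hiW]
        congr 1
        omega
      · have hin : i = n := by omega
        subst hin
        rw [hx, show W-1-n = 0 by omega, Nat.add_zero]
    have hcond : ((o+(L-W)+1)-ts+n) - n < m ∨ (((o+(L-W)+1)-ts+n) - n = m ∧ n < W) := by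
      rcases Nat.lt_or_ge ((o+(L-W)+1)-ts+n-n) m with h | h
      · exact Or.inl h
      · exact Or.inr ⟨by omega, by omega⟩
    rcases hspec.2 with hQt | hRt
    · by_cases hpal : palAt u (o+1) n
      · have hweld : u (ts+n) = u ((o+(L-W)+1)-1) := by
          apply segment_weld hn1 (by omega) ?_ ?_ ?_ (noWit ts n ((o+(L-W)+1)-ts+n) hcond).1
          · intro i hi
            rw [hQEnd i hi, hpal i hi, ← hQt (n-1-i) (by omega)]
          · intro s hs1 hs2 hOcc
            exact hadjT s (by omega) (by omega) (Or.inl (fOcc_of_f_f hQt hOcc))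
          · intro s hs1 hs2 hOcc
            exact hadjT s (by omega) (by omega) (Or.inr (rOcc_of_f_r hQt hOcc))
        rw [show (o+(L-W)+1)-1 = o+(L-W) by omega, hxEnd] at hweld
        exact final hweld (rOcc_of_fOcc_palAt hpal hQt)
      · apply gap_false (n := n) hn1 (show ts < o+(L-W)+1 by omega)
          (fun hp => hpal (palAt_transfer_f hQt hp))
          (fOcc_local_of_f hQt hQEnd) ?_ ?_
          (noWit ts n ((o+(L-W)+1)-ts+n) hcond).2
        · intro s hs1 hs2 hOcc
          exact hadjT s (by omega) (by omega) (Or.inl (fOcc_of_f_f hQt hOcc))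
        · intro s hs1 hs2 hOcc
          have hRs : rOcc u (o+1) n s := rOcc_of_f_r hQt hOcc
          rcases Nat.lt_or_ge ts s with hts2 | hts2
          · rcases Nat.lt_or_ge s (o+(L-W)+1) with hst | hst
            · exact hadjT s hts2 hst (Or.inr hRs)
            · have : s = o+(L-W)+1 := by omega
              subst this
              exact hpal (palAt_of_fOcc_rOcc hQEnd hRs)
          · have : s = ts := by omega
            subst this
            exact hpal (palAt_of_fOcc_rOcc hQt hRs)
    · have hweld : u (ts+n) = u ((o+(L-W)+1)-1) := by
        apply segment_weld hn1 (by omega) ?_ ?_ ?_ (noWit ts n ((o+(L-W)+1)-ts+n) hcond).1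
        · intro i hi
          rw [hQEnd i hi, hRt (n-1-i) (by omega), show n-1-(n-1-i) = i by omega]
        · intro s hs1 hs2 hOcc
          exact hadjT s (by omega) (by omega) (Or.inr (rOcc_of_r_f hRt hOcc))
        · intro s hs1 hs2 hOcc
          exact hadjT s (by omega) (by omega) (Or.inl (fOcc_of_r_r hRt hOcc))
      rw [show (o+(L-W)+1)-1 = o+(L-W) by omega, hxEnd] at hweld
      exact final hweld hRt

end ZDCProof
namespace ZDCProof
open ZDC

variable {A : Type*} {u : ℕ → A}

lemma factorAt_append (i a b : ℕ) :
    factorAt u i (a+b) = factorAt u i a ++ factorAt u (i+a) b := by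
  induction b with
  | zero => simp [factorAt]
  | succ b ih =>
    have e2 : factorAt u (i+a) (b+1) = factorAt u (i+a) b ++ [u (i+a+b)] :=
      factorAt_succ_right _ _
    have e1 : factorAt u i (a+(b+1)) = factorAt u i (a+b) ++ [u (i+a+b)] := by
      rw [show a+(b+1) = (a+b)+1 by omega, factorAt_succ_right,
        show i+(a+b) = i+a+b by omega]
    rw [e1, ih, e2, List.append_assoc]

lemma infix_factorAt {i₀ N s l : ℕ} (h1 : i₀ ≤ s) (h2 : s + l ≤ i₀ + N) :
    factorAt u s l <:+: factorAt u i₀ N := by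
  obtain ⟨a, rfl⟩ : ∃ a, s = i₀ + a := ⟨s - i₀, by omega⟩
  obtain ⟨c, hc⟩ : ∃ c, N = a + l + c := ⟨N - a - l, by omega⟩
  subst hc
  have key : factorAt u i₀ (a+(l+c)) =
      factorAt u i₀ a ++ (factorAt u (i₀+a) l ++ factorAt u (i₀+a+l) c) := by
    rw [factorAt_append, factorAt_append]
  exact ⟨factorAt u i₀ a, factorAt u (i₀+a+l) c,
    by rw [show a+l+c = a+(l+c) by omega, key, List.append_assoc]⟩

lemma exists_defect_word (hpos : 0 < Defect u) :
    ∃ w ∈ Lang u, 0 < wordDefect w := by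
  by_contra h
  push_neg at h
  have : Defect u ≤ 0 := by
    rw [Defect]
    apply iSup₂_le
    intro w hw
    have := h w hw
    simp [Nat.le_zero.mp this]
  exact absurd (lt_of_lt_of_le hpos this) (lt_irrefl 0)

theorem defect_witness (hpos : 0 < Defect u) : ∃ o W L, KindA u o W L := by
  obtain ⟨w, hwL, hwd⟩ := exists_defect_word hpos
  obtain ⟨i₀, hi₀⟩ := hwL
  set N := w.length with hN
  have hw : w = factorAt u i₀ N := hi₀
  have hcount : palCount w < N + 1 := by
    rw [wordDefect] at hwd
    omega
  classical
  -- longest palindromic suffix length of the prefix of length k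
  set ℓ : ℕ → ℕ := fun k => Nat.findGreatest (fun l => palAt u (i₀+k-l) l) k with hℓdef
  have hℓpal : ∀ k, palAt u (i₀+k-ℓ k) (ℓ k) := by
    intro k
    rcases Nat.eq_zero_or_pos k with hk | hk
    · subst hk
      have : ℓ 0 = 0 := Nat.le_zero.mp (Nat.findGreatest_le 0)
      rw [this]
      exact palAt_small (by omega)
    · exact Nat.findGreatest_spec (P := fun l => palAt u (i₀+k-l) l) (m := 1) hk
        (palAt_small le_rfl)
  have hℓle : ∀ k, ℓ k ≤ k := fun k => Nat.findGreatest_le k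
  have hℓ1 : ∀ k, 1 ≤ k → 1 ≤ ℓ k := by
    intro k hk
    exact Nat.le_findGreatest hk (palAt_small le_rfl)
  have hℓmax : ∀ k l, ℓ k < l → l ≤ k → ¬ palAt u (i₀+k-l) l :=
    fun k l h1 h2 =>
      Nat.findGreatest_is_greatest (P := fun l => palAt u (i₀+k-l) l) (n := k) h1 h2
  by_cases hgood : ∀ k, 1 ≤ k → k ≤ N →
      ∀ t, i₀ ≤ t → t + ℓ k ≤ i₀ + k → fOcc u (i₀+k-ℓ k) (ℓ k) t → t = i₀+k-ℓ k
  · -- all good: count palindromes, contradiction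
    exfalso
    set g : Fin N → List A := fun k => factorAt u (i₀+(k+1)-ℓ (k+1)) (ℓ (k+1)) with hg
    have hginj : Function.Injective g := by
      have key : ∀ k1 k2 : Fin N, (k1 : ℕ) < (k2 : ℕ) → g k1 = g k2 → False := by
        intro k1 k2 hlt heq
        have hlen : ℓ ((k1 : ℕ)+1) = ℓ ((k2 : ℕ)+1) := by
          have := congrArg List.length heq
          simpa [hg] using this
        set lam := ℓ ((k2 : ℕ)+1) with hlam
        have h1 : g k1 = factorAt u (i₀+((k1:ℕ)+1)-lam) lam := by
          show factorAt u (i₀+((k1:ℕ)+1)-ℓ ((k1:ℕ)+1)) (ℓ ((k1:ℕ)+1)) = _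
          rw [hlen]
        have h2 : g k2 = factorAt u (i₀+((k2:ℕ)+1)-lam) lam := rfl
        have heq2 : factorAt u (i₀+((k1:ℕ)+1)-lam) lam
            = factorAt u (i₀+((k2:ℕ)+1)-lam) lam := by
          rw [← h1, ← h2]
          exact heq
        have hocc : fOcc u (i₀+((k2:ℕ)+1)-lam) lam (i₀+((k1:ℕ)+1)-lam) := by
          intro i hi
          exact (factorAt_eq_iff.1 heq2) i hi
        have := hgood ((k2:ℕ)+1) (by omega) (by omega) (i₀+((k1:ℕ)+1)-lam)
          (by have := hℓle ((k1:ℕ)+1); omega)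
          (by have := hℓle ((k1:ℕ)+1); have := hℓ1 ((k1:ℕ)+1) (by omega); omega) hocc
        have hk1 := hℓle ((k1:ℕ)+1)
        have hk2 := hℓle ((k2:ℕ)+1)
        omega
      intro k1 k2 heq
      by_contra hne
      rcases Nat.lt_or_ge (k1 : ℕ) (k2 : ℕ) with h | h
      · exact key k1 k2 h heq
      · have hv : (k1 : ℕ) ≠ (k2 : ℕ) := fun hv => hne (Fin.ext hv)
        exact key k2 k1 (by omega) heq.symm
    have hmem : ∀ k : Fin N, g k ∈ {v : List A | v <:+: w ∧ v.reverse = v} := by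
      intro k
      constructor
      · rw [hw]
        apply infix_factorAt
        · have := hℓle ((k : ℕ)+1)
          omega
        · have := hℓ1 ((k : ℕ)+1) (by omega)
          have hkN : (k : ℕ) + 1 ≤ N := k.2
          have := hℓle ((k : ℕ)+1)
          omega
      · exact palAt_reverse_eq (hℓpal ((k : ℕ)+1))
    have hfin : {v : List A | v <:+: w ∧ v.reverse = v}.Finite := by
      apply Set.Finite.subset (w.sublists.toFinset.finite_toSet)
      intro v hv
      have : List.Sublist v w := hv.1.sublist
      simpa [List.mem_toFinset, List.mem_sublists] using this
    have hsub : insert ([] : List A) (Set.range g) ⊆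
        {v : List A | v <:+: w ∧ v.reverse = v} := by
      intro v hv
      rcases hv with hv | ⟨k, rfl⟩
      · rw [hv]
        exact ⟨List.nil_infix, rfl⟩
      · exact hmem k
    have hnil : ([] : List A) ∉ Set.range g := by
      rintro ⟨k, hk⟩
      have hlen0 := congrArg List.length hk
      simp only [hg, factorAt_length, List.length_nil] at hlen0
      have := hℓ1 ((k : ℕ)+1) (by omega)
      omega
    have hrange : Set.range g = ↑((Finset.univ : Finset (Fin N)).image g) := by
      ext v
      simp [Set.mem_range]
    have hcard : (insert ([] : List A) (Set.range g)).ncard = N + 1 := by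
      rw [Set.ncard_insert_of_notMem hnil (by rw [hrange]; exact (Finset.finite_toSet _))]
      rw [hrange, Set.ncard_coe_finset, Finset.card_image_of_injective _ hginj,
        Finset.card_univ, Fintype.card_fin]
    have hle : N + 1 ≤ palCount w := by
      rw [palCount, ← hcard]
      exact Set.ncard_le_ncard hsub hfin
    omega
  · -- bad prefix: extract KindA witness
    push_neg at hgood
    obtain ⟨k, hk1, hkN, t, ht1, ht2, htocc, htne⟩ := hgood
    set lam := ℓ k with hlam
    have hlamk := hℓle k
    have hlam1 := hℓ1 k hk1
    have htlt : t < i₀+k-lam := by omega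
    -- last earlier occurrence
    set j := Nat.findGreatest (fun t' => i₀ ≤ t' ∧ fOcc u (i₀+k-lam) lam t') (i₀+k-lam-1)
      with hjdef
    have hjspec : i₀ ≤ j ∧ fOcc u (i₀+k-lam) lam j :=
      Nat.findGreatest_spec (P := fun t' => i₀ ≤ t' ∧ fOcc u (i₀+k-lam) lam t')
        (m := t) (n := i₀+k-lam-1) (by omega) ⟨ht1, htocc⟩
    have hjle : j ≤ i₀+k-lam-1 := Nat.findGreatest_le _
    have hjmax : ∀ s, j < s → s < i₀+k-lam → ¬ fOcc u (i₀+k-lam) lam s := by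
      intro s h1 h2 h3
      apply Nat.findGreatest_is_greatest h1 (by omega)
      exact ⟨by omega, h3⟩
    refine ⟨j, lam, (i₀+k)-j, ?_⟩
    have hjb : j < i₀+k-lam := by omega
    refine ⟨hlam1, by omega, ?_, ?_, ?_, ?_⟩
    · -- SR
      intro i hi
      rw [show j+((i₀+k-j)-lam)+i = (i₀+k-lam)+i by omega]
      rw [hℓpal k i hi]
      rw [← hjspec.2 (lam-1-i) (by omega)]
    · -- int1
      intro t' h1 h2 hOcc
      have : fOcc u (i₀+k-lam) lam t' := fOcc_of_f_f hjspec.2 hOcc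
      exact hjmax t' (by omega) (by omega) this
    · -- int2
      intro t' h1 h2 hOcc
      have hr : rOcc u (i₀+k-lam) lam t' := rOcc_of_f_r hjspec.2 hOcc
      have : fOcc u (i₀+k-lam) lam t' := fOcc_of_rOcc_palAt (hℓpal k) hr
      exact hjmax t' (by omega) (by omega) this
    · -- non-palindromic
      intro hp
      apply hℓmax k ((i₀+k)-j) (by omega) (by omega)
      rw [show i₀+k-(i₀+k-j) = j by omega]
      exact hp

end ZDCProof

open ZDCProof

open ZDC in
/-- If `L(u)` is closed under reversal and `D(u) > 0`, then there exists a
non-palindromic factor `q` whose graph `Γ(q)` contains a cycle, or a palindromic factor `q`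
whose graph `Θ(q)` contains a cycle. Moreover, if the empty word is the unique factor `q`
with this property, then some letter has a non-palindromic complete return word in `u`. -/
theorem stmt_3 {A : Type*} [Fintype A] (u : ℕ → A)
    (hclosed : ClosedUnderReversal u) (hpos : 0 < Defect u) :
    ((∃ q ∈ Lang u, q.reverse ≠ q ∧ ¬ (GammaGraph u q).IsAcyclic) ∨
     (∃ q ∈ Lang u, q.reverse = q ∧ ¬ (ThetaGraph u q).IsAcyclic)) ∧
    ((∀ q ∈ Lang u,
        ((q.reverse ≠ q ∧ ¬ (GammaGraph u q).IsAcyclic) ∨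
         (q.reverse = q ∧ ¬ (ThetaGraph u q).IsAcyclic)) → q = []) →
      ∃ a : A, ∃ r, IsCompleteReturn u [a] r ∧ r.reverse ≠ r) := by
  constructor
  · by_contra hcon
    push_neg at hcon
    obtain ⟨h1, h2⟩ := hcon
    have HΓ : ∀ o' n', ¬ palAt u o' n' → (GammaGraph u (factorAt u o' n')).IsAcyclic := by
      intro o' n' hnp
      refine h1 (factorAt u o' n') (factorAt_mem_lang o' n') ?_
      intro hrev
      exact hnp (palAt_of_reverse_eq hrev)
    have HΘ : ∀ o' n', 1 ≤ n' → palAt u o' n' →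
        (ThetaGraph u (factorAt u o' n')).IsAcyclic := by
      intro o' n' _ hp
      exact h2 (factorAt u o' n') (factorAt_mem_lang o' n') (palAt_reverse_eq hp)
    have Hnil : (ThetaGraph u ([] : List A)).IsAcyclic ∨
        (∀ (a : A) (r : List A), IsCompleteReturn u [a] r → r.reverse = r) := by
      left
      have hmem : ([] : List A) ∈ Lang u := ⟨0, by simp [OccursAt, factorAt]⟩
      exact h2 [] hmem rfl
    obtain ⟨o, W, L, hA⟩ := defect_witness hpos
    exact (master hclosed HΓ HΘ Hnil (L-W) W o L rfl).1 hA
  · intro huniq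
    by_contra hcon
    push_neg at hcon
    have HΓ : ∀ o' n', ¬ palAt u o' n' → (GammaGraph u (factorAt u o' n')).IsAcyclic := by
      intro o' n' hnp
      by_contra hac
      have hq := huniq (factorAt u o' n') (factorAt_mem_lang o' n')
        (Or.inl ⟨fun hrev => hnp (palAt_of_reverse_eq hrev), hac⟩)
      have : n' = 0 := by
        have := congrArg List.length hq
        simpa using this
      exact hnp (palAt_small (by omega))
    have HΘ : ∀ o' n', 1 ≤ n' → palAt u o' n' →
        (ThetaGraph u (factorAt u o' n')).IsAcyclic := by
      intro o' n' hn1 hp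
      by_contra hac
      have hq := huniq (factorAt u o' n') (factorAt_mem_lang o' n')
        (Or.inr ⟨palAt_reverse_eq hp, hac⟩)
      have : n' = 0 := by
        have := congrArg List.length hq
        simpa using this
      omega
    have Hnil : (ThetaGraph u ([] : List A)).IsAcyclic ∨
        (∀ (a : A) (r : List A), IsCompleteReturn u [a] r → r.reverse = r) :=
      Or.inr (fun a r hr => hcon a r hr)
    obtain ⟨o, W, L, hA⟩ := defect_witness hpos
    exact (master hclosed HΓ HΘ Hnil (L-W) W o L rfl).1 hA
end

section
/- Let u be an infinite word over a finite alphabet A with language L(u) closed under reversal and D(u) < +∞. Then there exists a positive integer K such that for every factor w ∈ L(u) of length at least K: if w is not a palindrome then the graph Γ(w) is a tree, and if w is a palindrome then the graph Θ(w) is a tree. -/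
namespace SimpleGraph

variable {V : Type*} {G : SimpleGraph V}

theorem Connected.isTree_of_card_edgeSet_lt [Finite V] (hG : G.Connected)
    (h : Nat.card G.edgeSet < Nat.card V) : G.IsTree :=
  isTree_iff_connected_and_card.2 ⟨hG, le_antisymm h hG.card_vert_le_card_edgeSet_add_one⟩

theorem Connected.isTree_of_edgeLabel [Finite V] (hG : G.Connected) (f : V → V → V) (v₀ : V)
    (hf₀ : ∀ x y, G.Adj x y → f x y ≠ v₀)
    (hf : ∀ x y x' y', G.Adj x y → G.Adj x' y' → f x y = f x' y' → s(x, y) = s(x', y')) :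
    G.IsTree := by
  have hout (e : Sym2 V) : s(e.out.1, e.out.2) = e := Quot.out_eq e
  have hadj (e : G.edgeSet) : G.Adj e.1.out.1 e.1.out.2 := by
    rw [← mem_edgeSet, hout]
    exact e.2
  let g : G.edgeSet → {v // v ≠ v₀} := fun e => ⟨f _ _, hf₀ _ _ (hadj e)⟩
  have hg : Function.Injective g := fun e e' h => by
    have := hf _ _ _ _ (hadj e) (hadj e') (congrArg Subtype.val h)
    rwa [hout, hout, SetCoe.ext_iff] at this
  exact hG.isTree_of_card_edgeSet_lt <|
    (Nat.card_le_card_of_injective g hg).trans_lt (Finite.card_subtype_lt (not_not.2 rfl))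

theorem connected_of_reachable_consecutive [Nonempty V] {S : ℕ → Prop} (f : ℕ → V)
    (hf : ∀ v, ∃ p, S p ∧ f p = v)
    (hstep : ∀ p q, S p → S q → p < q → (∀ k, p < k → k < q → ¬ S k) → G.Reachable (f p) (f q)) :
    G.Connected := by
  have key : ∀ d p q, S p → S q → p + d = q → G.Reachable (f p) (f q) := by
    intro d
    induction d using Nat.strong_induction_on with
    | _ d ih =>
      intro p q hp hq hpq
      by_cases hmid : ∃ k, p < k ∧ k < q ∧ S k
      · obtain ⟨k, hpk, hkq, hk⟩ := hmid
        exact (ih (k - p) (by omega) p k hp hk (by omega)).trans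
          (ih (q - k) (by omega) k q hk hq (by omega))
      · push Not at hmid
        rcases Nat.eq_zero_or_pos d with rfl | hd
        · subst hpq; rfl
        · exact hstep p q hp hq (by omega) hmid
  refine Connected.mk fun x y => ?_
  obtain ⟨p, hp, rfl⟩ := hf x
  obtain ⟨q, hq, rfl⟩ := hf y
  rcases le_total p q with h | h
  · exact key (q - p) p q hp hq (by omega)
  · exact (key (p - q) q p hq hp (by omega)).symm

end SimpleGraph

namespace ZDC

variable {A : Type*} {u : ℕ → A}

@[simp] theorem length_factorAt (i n : ℕ) : (factorAt u i n).length = n := by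
  simp [factorAt]

@[simp] theorem getElem_factorAt {i n j : ℕ} (h : j < (factorAt u i n).length) :
    (factorAt u i n)[j] = u (i + j) := by
  simp [factorAt]

theorem factorAt_add (i m n : ℕ) :
    factorAt u i (m + n) = factorAt u i m ++ factorAt u (i + m) n := by
  simp [factorAt, List.range_add, add_assoc]

theorem factorAt_succ (i n : ℕ) : factorAt u i (n + 1) = factorAt u i n ++ [u (i + n)] := by
  simp [factorAt, List.range_succ]

theorem factorAt_succ' (i n : ℕ) : factorAt u i (n + 1) = u i :: factorAt u (i + 1) n := by
  rw [add_comm n, factorAt_add]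
  simp [factorAt]

theorem factorAt_mem_lang (i n : ℕ) : factorAt u i n ∈ Lang u :=
  ⟨i, by simp [OccursAt]⟩

theorem occursAt_cons_iff {a : A} {w : List A} {p : ℕ} :
    OccursAt u (a :: w) p ↔ u p = a ∧ OccursAt u w (p + 1) := by
  simp [OccursAt, factorAt_succ', eq_comm]

theorem occursAt_append_singleton_iff {b : A} {w : List A} {p : ℕ} :
    OccursAt u (w ++ [b]) p ↔ OccursAt u w p ∧ u (p + w.length) = b := by
  simp [OccursAt, factorAt_succ, eq_comm]

theorem ClosedUnderReversal.reverse_mem_iff (h : ClosedUnderReversal u) {w : List A} :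
    w.reverse ∈ Lang u ↔ w ∈ Lang u :=
  ⟨fun hw => w.reverse_reverse ▸ h _ hw, h w⟩

def WindowEq (u : ℕ → A) (n a b : ℕ) : Prop := ∀ j < n, u (a + j) = u (b + j)

def WindowRev (u : ℕ → A) (n a b : ℕ) : Prop := ∀ j j', j + j' + 1 = n → u (a + j) = u (b + j')

def WindowPal (u : ℕ → A) (n s : ℕ) : Prop := WindowRev u n s s

section Window

variable {n a b c : ℕ}

theorem WindowEq.symm (h : WindowEq u n a b) : WindowEq u n b a := fun j hj => (h j hj).symm

theorem WindowEq.trans (h : WindowEq u n a b) (h' : WindowEq u n b c) : WindowEq u n a c :=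
  fun j hj => (h j hj).trans (h' j hj)

theorem WindowRev.symm (h : WindowRev u n a b) : WindowRev u n b a :=
  fun j j' hj => (h j' j (by omega)).symm

theorem WindowEq.trans_rev (h : WindowEq u n a b) (h' : WindowRev u n b c) : WindowRev u n a c :=
  fun j j' hj => (h j (by omega)).trans (h' j j' hj)

theorem WindowRev.trans_eq (h : WindowRev u n a b) (h' : WindowEq u n b c) : WindowRev u n a c :=
  fun j j' hj => (h j j' hj).trans (h' j' (by omega))

theorem WindowRev.trans (h : WindowRev u n a b) (h' : WindowRev u n b c) : WindowEq u n a c :=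
  fun j hj => (h j (n - j - 1) (by omega)).trans (h'.symm j (n - j - 1) (by omega)).symm

theorem WindowPal.reflect {ℓ s t t' : ℕ} (hp : WindowPal u ℓ s) (h : t + n + t' = ℓ) :
    WindowRev u n (s + t) (s + t') := fun j j' hj => by
  simpa [add_assoc] using hp (t + j) (t' + j') (by omega)

theorem WindowPal.of_prefix {ℓ s d : ℕ} (hp : WindowPal u ℓ s) (hd : d + n = ℓ)
    (hn : WindowPal u n s) : WindowPal u n (s + d) := fun j j' hj => by
  rw [add_assoc, add_assoc]
  exact (hp (d + j) j' (by omega)).trans ((hn j' j (by omega)).trans (hp j (d + j') (by omega)))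

theorem WindowPal.windowRev_eq (hp : WindowPal u n a) : WindowRev u n a = WindowEq u n a :=
  funext fun _ => propext ⟨hp.trans, hp.trans_eq⟩

theorem factorAt_eq_factorAt_iff : factorAt u a n = factorAt u b n ↔ WindowEq u n a b := by
  simp [List.ext_getElem_iff, WindowEq]

theorem reverse_factorAt_eq_factorAt_iff :
    (factorAt u a n).reverse = factorAt u b n ↔ WindowRev u n a b := by
  simp only [List.ext_getElem_iff, List.length_reverse, length_factorAt, List.getElem_reverse,
    getElem_factorAt, true_and, WindowRev]
  constructor
  · intro h j j' hj
    simpa [show n - 1 - j' = j by omega] using h j' (by omega) (by omega)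
  · intro h j _ hj
    exact h _ _ (by omega)

theorem OccursAt.occursAt_iff {w : List A} {i₀ i : ℕ} (hw : OccursAt u w i₀) :
    OccursAt u w i ↔ WindowEq u w.length i₀ i := by
  rw [OccursAt, ← factorAt_eq_factorAt_iff, ← hw]

theorem OccursAt.occursAt_reverse_iff {w : List A} {i₀ i : ℕ} (hw : OccursAt u w i₀) :
    OccursAt u w.reverse i ↔ WindowRev u w.length i₀ i := by
  rw [OccursAt, ← reverse_factorAt_eq_factorAt_iff, ← hw, List.length_reverse,
    List.reverse_eq_iff]

theorem OccursAt.reverse_eq_self_iff {w : List A} {i₀ : ℕ} (hw : OccursAt u w i₀) :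
    w.reverse = w ↔ WindowPal u w.length i₀ := by
  conv_lhs => rw [hw]
  exact reverse_factorAt_eq_factorAt_iff

end Window

theorem infix_of_prefix_of_suffix_concat {x y w : List A} {a : A} (hxy : x <+: y)
    (hlt : x.length < y.length) (hy : y <:+ w ++ [a]) : x <:+: w := by
  rcases List.suffix_concat_iff.1 hy with rfl | ⟨t, rfl, ht⟩
  · simp at hlt
  · exact (List.prefix_of_prefix_length_le hxy (List.prefix_append t [a])
      (by simp at hlt; omega)).isInfix.trans ht.isInfix

/-- The shorter of two palindromic suffixes is also a prefix of the longer one, hence occurs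
earlier. -/
theorem eq_of_palindrome_suffix_not_infix {x y w : List A} {a : A} (hx : x <:+ w ++ [a])
    (hy : y <:+ w ++ [a]) (hxp : x.reverse = x) (hyp : y.reverse = y) (hxw : ¬ x <:+: w)
    (hyw : ¬ y <:+: w) : x = y := by
  wlog hle : x.length ≤ y.length generalizing x y
  · exact (this hy hx hyp hxp hyw hxw (by omega)).symm
  have hsuf : x <:+ y := List.suffix_of_suffix_length_le hx hy hle
  rcases hle.lt_or_eq with hlt | heq
  · refine absurd (infix_of_prefix_of_suffix_concat ?_ hlt hy) hxw
    rw [← hxp, ← hyp]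
    exact List.reverse_prefix.2 hsuf
  · exact hsuf.eq_of_length heq

theorem finite_palindrome_infixes (w : List A) : {v : List A | v <:+: w ∧ v.reverse = v}.Finite :=
  (List.finite_toSet w.sublists).subset fun _ hv => List.mem_sublists.2 hv.1.sublist

theorem palindrome_infixes_append_singleton_subset (w : List A) (a : A) :
    {v : List A | v <:+: w ++ [a] ∧ v.reverse = v} ⊆
      {v | v <:+: w ∧ v.reverse = v} ∪ {v | v <:+ w ++ [a] ∧ v.reverse = v ∧ ¬ v <:+: w} := by
  rintro v ⟨hv, hp⟩
  by_cases hw : v <:+: w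
  · exact Or.inl ⟨hw, hp⟩
  · exact Or.inr ⟨(List.infix_concat_iff.1 hv).resolve_right hw, hp, hw⟩

theorem palCount_append_singleton_le (w : List A) (a : A) :
    palCount (w ++ [a]) ≤ palCount w + 1 := by
  have hnew : {v | v <:+ w ++ [a] ∧ v.reverse = v ∧ ¬ v <:+: w}.Subsingleton :=
    fun x hx y hy => eq_of_palindrome_suffix_not_infix hx.1 hy.1 hx.2.1 hy.2.1 hx.2.2 hy.2.2
  have := hnew.finite.to_subtype
  calc palCount (w ++ [a])
      ≤ palCount w + {v | v <:+ w ++ [a] ∧ v.reverse = v ∧ ¬ v <:+: w}.ncard :=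
        (Set.ncard_le_ncard (palindrome_infixes_append_singleton_subset w a)
          ((finite_palindrome_infixes w).union hnew.finite)).trans (Set.ncard_union_le _ _)
    _ ≤ palCount w + 1 := by gcongr; exact Set.ncard_le_one_iff_subsingleton.2 hnew

theorem exists_new_palindrome_of_palCount_lt {w : List A} {a : A}
    (h : palCount w < palCount (w ++ [a])) : ∃ v, v <:+ w ++ [a] ∧ v.reverse = v ∧ ¬ v <:+: w := by
  by_contra hnew
  have hsub : {v | v <:+: w ++ [a] ∧ v.reverse = v} ⊆ {v | v <:+: w ∧ v.reverse = v} :=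
    fun v hv => (palindrome_infixes_append_singleton_subset w a hv).resolve_right
      fun h' => hnew ⟨v, h'⟩
  exact h.not_ge (Set.ncard_le_ncard hsub (finite_palindrome_infixes w))

theorem palCount_factorAt_zero_le (m : ℕ) : palCount (factorAt u 0 m) ≤ m + 1 := by
  induction m with
  | zero =>
    have hsub : {v : List A | v <:+: factorAt u 0 0 ∧ v.reverse = v} ⊆ {[]} := fun v hv => by
      simpa [factorAt] using hv.1
    exact (Set.ncard_le_ncard hsub (Set.finite_singleton _)).trans (Set.ncard_singleton _).le
  | succ m ih =>
    have := palCount_append_singleton_le (factorAt u 0 m) (u m)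
    rw [factorAt_succ, zero_add]
    omega

theorem exists_factorAt_of_suffix_factorAt_zero {v : List A} {e : ℕ} (h : v <:+ factorAt u 0 e) :
    ∃ s, s + v.length = e ∧ v = factorAt u s v.length := by
  obtain ⟨t, ht⟩ := h
  obtain rfl : t.length + v.length = e := by simpa using congrArg List.length ht
  rw [factorAt_add, zero_add] at ht
  exact ⟨t.length, rfl, (List.append_inj ht (by simp)).2⟩

theorem infix_factorAt_zero {v : List A} {i m : ℕ} (h : i + v.length ≤ m)
    (hv : v = factorAt u i v.length) : v <:+: factorAt u 0 m := by
  obtain ⟨r, rfl⟩ : ∃ r, m = i + v.length + r := ⟨m - i - v.length, by omega⟩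
  rw [factorAt_add, factorAt_add, zero_add, ← hv]
  exact List.infix_append _ _ _

def HasUnioccurrentPalSuffixes (u : ℕ → A) (N : ℕ) : Prop :=
  ∀ e, N < e → ∃ s ℓ, s + ℓ = e ∧ WindowPal u ℓ s ∧ ∀ i < s, ¬ WindowEq u ℓ s i

theorem HasUnioccurrentPalSuffixes.mono {N M : ℕ} (h : HasUnioccurrentPalSuffixes u N)
    (hNM : N ≤ M) : HasUnioccurrentPalSuffixes u M :=
  fun e he => h e (by omega)

theorem exists_unioccurrent_palSuffix_of_palCount_lt {m : ℕ}
    (h : palCount (factorAt u 0 m) < palCount (factorAt u 0 (m + 1))) :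
    ∃ s ℓ, s + ℓ = m + 1 ∧ WindowPal u ℓ s ∧ ∀ i < s, ¬ WindowEq u ℓ s i := by
  rw [factorAt_succ, zero_add] at h
  obtain ⟨v, hsuf, hpal, hnew⟩ := exists_new_palindrome_of_palCount_lt h
  obtain ⟨s, hs, hv⟩ := exists_factorAt_of_suffix_factorAt_zero
    (show v <:+ factorAt u 0 (m + 1) by rwa [factorAt_succ, zero_add])
  refine ⟨s, v.length, hs, ?_, fun i hi heq => hnew ?_⟩
  · rw [hv] at hpal
    exact reverse_factorAt_eq_factorAt_iff.1 hpal
  · exact infix_factorAt_zero (i := i) (by omega) (hv.trans (factorAt_eq_factorAt_iff.2 heq))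

theorem exists_hasUnioccurrentPalSuffixes (hfin : Defect u ≠ ⊤) :
    ∃ N, HasUnioccurrentPalSuffixes u N := by
  lift Defect u to ℕ using hfin with B hB
  set d : ℕ → ℕ := fun m => wordDefect (factorAt u 0 m) with hd
  have hdB : ∀ m, d m ≤ B := fun m => by
    have : (d m : ℕ∞) ≤ B := hB ▸ le_iSup₂ (f := fun w (_ : w ∈ Lang u) => (wordDefect w : ℕ∞))
      _ (factorAt_mem_lang 0 m)
    exact_mod_cast this
  have hP (m : ℕ) := palCount_factorAt_zero_le (u := u) m
  have hstep (m : ℕ) : palCount (factorAt u 0 (m + 1)) ≤ palCount (factorAt u 0 m) + 1 := by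
    rw [factorAt_succ, zero_add]
    exact palCount_append_singleton_le _ _
  have hmono : Monotone d := monotone_nat_of_le_succ fun m => by
    simp only [hd, wordDefect, length_factorAt]
    have := hstep m
    omega
  obtain ⟨N, hN⟩ : ∃ N, ∀ m, d m ≤ d N := by
    have hbdd : BddAbove (Set.range d) := ⟨B, Set.forall_mem_range.2 hdB⟩
    obtain ⟨N, hN⟩ := Nat.sSup_mem (Set.range_nonempty d) hbdd
    exact ⟨N, fun m => hN ▸ le_csSup hbdd ⟨m, rfl⟩⟩
  refine ⟨N, fun e he => ?_⟩
  obtain ⟨m, rfl⟩ : ∃ m, e = m + 1 := ⟨e - 1, by omega⟩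
  refine exists_unioccurrent_palSuffix_of_palCount_lt ?_
  have h1 := hN (m + 1)
  have h2 := hmono (show N ≤ m by omega)
  have := hP m
  have := hP (m + 1)
  simp only [hd, wordDefect, length_factorAt] at h1 h2
  omega

namespace HasUnioccurrentPalSuffixes

variable {N e m t i : ℕ}

theorem exists_long (h : HasUnioccurrentPalSuffixes u N) (he : N < e)
    (hshort : ∀ s ℓ, s + ℓ = e → ℓ ≤ m → WindowPal u ℓ s → ∃ i < s, WindowEq u ℓ s i) :
    ∃ s ℓ, m < ℓ ∧ s + ℓ = e ∧ WindowPal u ℓ s := by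
  obtain ⟨s, ℓ, hse, hpal, huniq⟩ := h e he
  refine ⟨s, ℓ, not_le.1 fun hℓ => ?_, hse, hpal⟩
  obtain ⟨i, hi, heq⟩ := hshort s ℓ hse hℓ hpal
  exact huniq i hi heq

theorem exists_long_of_windowEq (h : HasUnioccurrentPalSuffixes u N) (he : N < t + m)
    (hi : i < t) (heq : WindowEq u m t i) : ∃ s ℓ, m < ℓ ∧ s + ℓ = t + m ∧ WindowPal u ℓ s :=
  h.exists_long he fun s ℓ hs hℓ _ => ⟨i + (s - t), by omega, fun j hj => by
    simpa [show t + (s - t + j) = s + j by omega, add_assoc] using heq (s - t + j) (by omega)⟩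

/-- A palindromic suffix of the window at `t` equals its reversal, a prefix of the window at
`i`. -/
theorem exists_long_of_windowRev (h : HasUnioccurrentPalSuffixes u N) (he : N < t + m)
    (hi : i < t) (hrev : WindowRev u m t i) : ∃ s ℓ, m < ℓ ∧ s + ℓ = t + m ∧ WindowPal u ℓ s :=
  h.exists_long he fun s ℓ hs hℓ hpal => ⟨i, by omega, fun j hj => by
    rw [hpal j (ℓ - 1 - j) (by omega), show s + (ℓ - 1 - j) = t + (s - t + (ℓ - 1 - j)) by omega]
    exact hrev _ _ (by omega)⟩

end HasUnioccurrentPalSuffixes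

/-- `X` and `Y` behave like the sets of occurrences in `u` of a word of length `n` and of its
reversal (the same set when the word is a palindrome). -/
structure OccurrencePair (u : ℕ → A) (n : ℕ) (X Y : ℕ → Prop) : Prop where
  uniPal : HasUnioccurrentPalSuffixes u n
  eq_of_X : ∀ ⦃i j⦄, X i → X j → WindowEq u n i j
  eq_of_Y : ∀ ⦃i j⦄, Y i → Y j → WindowEq u n i j
  rev_of_X_Y : ∀ ⦃i j⦄, X i → Y j → WindowRev u n i j
  reflect_X : ∀ ⦃ℓ s t t'⦄, WindowPal u ℓ s → t + n + t' = ℓ → X (s + t) → Y (s + t')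
  reflect_Y : ∀ ⦃ℓ s t t'⦄, WindowPal u ℓ s → t + n + t' = ℓ → Y (s + t) → X (s + t')

def Gap (X Y : ℕ → Prop) (i j : ℕ) : Prop := i < j ∧ ∀ k, i < k → k < j → ¬ X k ∧ ¬ Y k

theorem Gap.symm {X Y : ℕ → Prop} {i j : ℕ} (h : Gap X Y i j) : Gap Y X i j :=
  ⟨h.1, fun k h1 h2 => (h.2 k h1 h2).symm⟩

/-- `(a, b)` is a bilateral extension as witnessed by the occurrence at `p + 1`: `a w b` if it
is one of `X`, `b w̃ a` if it is one of `Y`. -/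
def Realizes (u : ℕ → A) (n : ℕ) (X Y : ℕ → Prop) (a b : A) (p : ℕ) : Prop :=
  X (p + 1) ∧ u p = a ∧ u (p + 1 + n) = b ∨ Y (p + 1) ∧ u p = b ∧ u (p + 1 + n) = a

noncomputable def firstRealization (u : ℕ → A) (n : ℕ) (X Y : ℕ → Prop) (a b : A) : ℕ :=
  sInf {p | Realizes u n X Y a b p}

section Realizes

variable {n p s : ℕ} {X Y : ℕ → Prop} {a b : A}

theorem realizes_swap : Realizes u n X Y a b p ↔ Realizes u n Y X b a p := Or.comm

theorem firstRealization_swap : firstRealization u n Y X b a = firstRealization u n X Y a b := by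
  simp only [firstRealization, ← realizes_swap]

theorem realizes_firstRealization (h : ∃ p, Realizes u n X Y a b p) :
    Realizes u n X Y a b (firstRealization u n X Y a b) :=
  Nat.sInf_mem h

theorem not_realizes_of_lt_firstRealization (h : s < firstRealization u n X Y a b) :
    ¬ Realizes u n X Y a b s :=
  Nat.notMem_of_lt_sInf h

end Realizes

namespace OccurrencePair

variable {n : ℕ} {X Y : ℕ → Prop}

theorem symm (P : OccurrencePair u n X Y) : OccurrencePair u n Y X :=
  ⟨P.uniPal, P.eq_of_Y, P.eq_of_X, fun _ _ hy hx => (P.rev_of_X_Y hx hy).symm, P.reflect_Y,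
    P.reflect_X⟩

theorem of_window (hN : HasUnioccurrentPalSuffixes u n) (i₀ : ℕ) :
    OccurrencePair u n (WindowEq u n i₀) (WindowRev u n i₀) where
  uniPal := hN
  eq_of_X _ _ hi hj := hi.symm.trans hj
  eq_of_Y _ _ hi hj := hi.symm.trans hj
  rev_of_X_Y _ _ hi hj := hi.symm.trans_rev hj
  reflect_X _ _ _ _ hpal ht hX := hX.trans_rev (hpal.reflect ht)
  reflect_Y _ _ _ _ hpal ht hY := hY.trans (hpal.reflect ht)

theorem of_windowPal (hN : HasUnioccurrentPalSuffixes u n) {i₀ : ℕ} (hp : WindowPal u n i₀) :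
    OccurrencePair u n (WindowEq u n i₀) (WindowEq u n i₀) where
  uniPal := hN
  eq_of_X _ _ hi hj := hi.symm.trans hj
  eq_of_Y _ _ hi hj := hi.symm.trans hj
  rev_of_X_Y _ _ hi hj := hi.symm.trans_rev (hp.trans_eq hj)
  reflect_X _ _ _ _ hpal ht hX := (hp.trans_eq hX).trans (hpal.reflect ht)
  reflect_Y _ _ _ _ hpal ht hX := (hp.trans_eq hX).trans (hpal.reflect ht)

variable {i j p p' q p₀ s t c d ℓ : ℕ}

theorem gap_reflect (P : OccurrencePair u n X Y) (hpal : WindowPal u (c + n) s)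
    (hgap : Gap X Y (s + d) (s + c)) : Gap X Y s (s + (c - d)) := by
  refine ⟨by have := hgap.1; omega, fun k hk1 hk2 => ?_⟩
  obtain ⟨g, rfl⟩ : ∃ g, k = s + g := ⟨k - s, by omega⟩
  have hin := hgap.2 (s + (c - g)) (by omega) (by omega)
  exact ⟨fun hX => hin.2 (P.reflect_X hpal (by omega) hX),
    fun hY => hin.1 (P.reflect_Y hpal (by omega) hY)⟩

theorem exists_gap_Y_Y_of_gap_X_X (P : OccurrencePair u n X Y) (hne : ∀ k, ¬ (X k ∧ Y k))
    (hi : X i) (hj : X j) (hgap : Gap X Y i j) : ∃ t t', t' < j ∧ Y t ∧ Y t' ∧ Gap X Y t t' := by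
  obtain ⟨s, ℓ, hℓ, hse, hpal⟩ :=
    P.uniPal.exists_long_of_windowEq (by have := hgap.1; omega) hgap.1 (P.eq_of_X hj hi)
  obtain ⟨c, rfl⟩ : ∃ c, ℓ = c + n := ⟨ℓ - n, by omega⟩
  obtain rfl : j = s + c := by omega
  have hYs : Y s := by simpa using P.reflect_X hpal (t' := 0) rfl hj
  have hsi : s < i := by
    by_contra! h
    rcases h.eq_or_lt with h | h
    · subst h
      exact hne i ⟨hi, hYs⟩
    · exact (hgap.2 s h (by omega)).2 hYs
  obtain ⟨d, rfl⟩ : ∃ d, i = s + d := ⟨i - s, by omega⟩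
  have hYd : Y (s + (c - d)) := P.reflect_X hpal (by have := hgap.1; omega) hi
  have hdi : s + (c - d) < s + d := by
    by_contra! h
    rcases h.eq_or_lt with h | h
    · exact hne (s + d) ⟨hi, h ▸ hYd⟩
    · exact (hgap.2 _ h (by omega)).2 hYd
  exact ⟨s, s + (c - d), by omega, hYs, hYd, P.gap_reflect hpal hgap⟩

theorem not_gap_X_X (P : OccurrencePair u n X Y) (hne : ∀ k, ¬ (X k ∧ Y k)) (hi : X i)
    (hj : X j) : ¬ Gap X Y i j := by
  suffices ∀ j, (∀ i, X i → X j → ¬ Gap X Y i j) ∧ (∀ i, Y i → Y j → ¬ Gap X Y i j) from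
    (this j).1 i hi hj
  intro j
  induction j using Nat.strong_induction_on with
  | _ j ih =>
    refine ⟨fun i hi hj hgap => ?_, fun i hi hj hgap => ?_⟩
    · obtain ⟨t, t', ht', hYt, hYt', hgap'⟩ := P.exists_gap_Y_Y_of_gap_X_X hne hi hj hgap
      exact (ih t' ht').2 t hYt hYt' hgap'
    · obtain ⟨t, t', ht', hXt, hXt', hgap'⟩ :=
        P.symm.exists_gap_Y_Y_of_gap_X_X (fun k hk => hne k hk.symm) hi hj hgap.symm
      exact (ih t' ht').1 t hXt hXt' hgap'.symm

theorem windowPal_of_gap (P : OccurrencePair u n X Y) (hi : X i) (hj : Y j)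
    (hgap : Gap X Y i j) : WindowPal u (j - i + n) i := by
  induction i using Nat.strong_induction_on generalizing j with
  | _ i ih =>
    obtain ⟨s, ℓ, hℓ, hse, hpal⟩ := P.uniPal.exists_long_of_windowRev
      (by have := hgap.1; omega) hgap.1 (P.rev_of_X_Y hi hj).symm
    obtain ⟨c, rfl⟩ : ∃ c, ℓ = c + n := ⟨ℓ - n, by omega⟩
    obtain rfl : j = s + c := by omega
    have hXs : X s := by simpa using P.reflect_Y hpal (t' := 0) rfl hj
    rcases lt_trichotomy s i with hsi | rfl | his
    · obtain ⟨d, rfl⟩ : ∃ d, i = s + d := ⟨i - s, by omega⟩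
      have hYd : Y (s + (c - d)) := P.reflect_X hpal (by have := hgap.1; omega) hi
      have hdi : s + (c - d) ≤ s + d := by
        by_contra! h
        exact (hgap.2 _ h (by omega)).2 hYd
      have hinner := ih s hsi hXs hYd (P.gap_reflect hpal hgap)
      rw [show s + (c - d) - s = c - d by omega] at hinner
      rw [show s + c - (s + d) = c - d by omega]
      exact hpal.of_prefix (by have := hgap.1; omega) hinner
    · simpa using hpal
    · exact absurd hXs (hgap.2 s his (by omega)).1

theorem letter_after_eq_of_gap (P : OccurrencePair u n X Y) (hp : X (p + 1)) (hq : Y (q + 1))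
    (hgap : Gap X Y (p + 1) (q + 1)) : u (p + 1 + n) = u q := by
  have := P.windowPal_of_gap hp hq hgap n (q - p - 1) (by have := hgap.1; omega)
  rwa [show p + 1 + (q - p - 1) = q by have := hgap.1; omega] at this

theorem exists_mirror_of_windowPal (P : OccurrencePair u n X Y) (hpal : WindowPal u ℓ s)
    (hℓ : n + 1 < ℓ) (he : s + ℓ = p + n + 2) (hX : X (p + 1))
    (hne : ¬ (Y (p + 1) ∧ u p = u (p + 1 + n))) :
    s < p ∧ Y (s + 1) ∧ u s = u (p + 1 + n) ∧ u (s + 1 + n) = u p := by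
  have hY : Y (s + 1) :=
    P.reflect_X hpal (t := ℓ - n - 1) (by omega) (by rwa [show s + (ℓ - n - 1) = p + 1 by omega])
  have h0 : u s = u (p + 1 + n) := by
    simpa [show s + (ℓ - 1) = p + 1 + n by omega] using hpal 0 (ℓ - 1) (by omega)
  have h1 : u (s + 1 + n) = u p := by
    simpa [show s + (ℓ - n - 2) = p by omega, add_assoc, add_comm 1 n] using
      hpal (n + 1) (ℓ - n - 2) (by omega)
  refine ⟨?_, hY, h0, h1⟩
  by_contra! hsp
  obtain rfl : s = p := by omega
  exact hne ⟨hY, h0⟩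

theorem firstRealization_ne_of_X_le (P : OccurrencePair u n X Y) (hX : X (p + 1)) (ht : X t)
    (htp : t ≤ p) (hc : u (t + n) = u (p + 1 + n)) (hne : ¬ (Y (p + 1) ∧ u p = u (p + 1 + n))) :
    firstRealization u n X Y (u p) (u (p + 1 + n)) ≠ p := by
  have heq : WindowEq u (n + 1) (p + 1) t := fun j hj => by
    rcases (Nat.lt_succ_iff.1 hj).lt_or_eq with hj | rfl
    · exact P.eq_of_X hX ht j hj
    · exact hc.symm
  obtain ⟨s, ℓ, hℓ, hse, hpal⟩ :=
    P.uniPal.exists_long_of_windowEq (by omega) (by omega : t < p + 1) heq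
  obtain ⟨hsp, hY, h0, h1⟩ := P.exists_mirror_of_windowPal hpal hℓ (by omega) hX hne
  exact fun h => not_realizes_of_lt_firstRealization (h ▸ hsp) (.inr ⟨hY, h0, h1⟩)

theorem firstRealization_ne_of_X_succ_le (P : OccurrencePair u n X Y) (hX : X (p₀ + 1))
    (hp₀ : p₀ ≤ p) (hY : Y (p + 1)) (hc : u (p + 1 + n) = u p₀)
    (hne : ¬ (X (p + 1) ∧ u p = u (p + 1 + n))) :
    firstRealization u n X Y (u p₀) (u p) ≠ p := by
  have hrev : WindowRev u (n + 1) (p + 1) p₀ := fun j j' hj => by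
    rcases j' with _ | j'
    · simpa [show j = n by omega] using hc
    · rw [show p₀ + (j' + 1) = p₀ + 1 + j' by omega]
      exact (P.rev_of_X_Y hX hY j' j (by omega)).symm
  obtain ⟨s, ℓ, hℓ, hse, hpal⟩ :=
    P.uniPal.exists_long_of_windowRev (by omega) (by omega : p₀ < p + 1) hrev
  obtain ⟨hsp, hXs, h0, h1⟩ := P.symm.exists_mirror_of_windowPal hpal hℓ (by omega) hY hne
  exact fun h => not_realizes_of_lt_firstRealization (h ▸ hsp) (.inl ⟨hXs, h0.trans hc, h1⟩)

theorem eq_of_firstRealization (P : OccurrencePair u n X Y) {c : A}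
    (hp : firstRealization u n X Y (u p) c = p) (hp' : firstRealization u n X Y (u p') c = p')
    (hX : X (p + 1)) (hX' : X (p' + 1)) (hc : u (p + 1 + n) = c) (hc' : u (p' + 1 + n) = c)
    (hne : ¬ (Y (p + 1) ∧ u p = c)) (hne' : ¬ (Y (p' + 1) ∧ u p' = c)) : p = p' := by
  wlog h : p < p' generalizing p p'
  · rcases (not_lt.1 h).lt_or_eq with h | h
    · exact (this hp' hp hX' hX hc' hc hne' hne h).symm
    · exact h.symm
  subst hc'
  exact absurd hp' (P.firstRealization_ne_of_X_le hX' hX (by omega) hc hne')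

end OccurrencePair

section Factor

variable {w : List A} {i₀ : ℕ}

section Extensions

variable {a b : A} {t : ℕ}

theorem mem_Eminus_iff (hw : OccursAt u w i₀) :
    a ∈ Eminus u w ↔ ∃ p, WindowEq u w.length i₀ (p + 1) ∧ u p = a := by
  simp only [Eminus, Lang, Set.mem_ofPred_eq, occursAt_cons_iff, hw.occursAt_iff, and_comm]

theorem mem_Eplus_iff (hclosed : ClosedUnderReversal u) (hw : OccursAt u w i₀) :
    b ∈ Eplus u w ↔ ∃ p, WindowRev u w.length i₀ (p + 1) ∧ u p = b := by
  rw [Eplus, Set.mem_ofPred_eq, ← hclosed.reverse_mem_iff]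
  simp only [List.reverse_append, List.reverse_cons, List.reverse_nil, List.nil_append,
    List.singleton_append, Lang, Set.mem_ofPred_eq, occursAt_cons_iff, hw.occursAt_reverse_iff,
    and_comm]

theorem letter_after_mem_Eplus (hw : OccursAt u w i₀) (h : WindowEq u w.length i₀ t) :
    u (t + w.length) ∈ Eplus u w :=
  ⟨t, occursAt_append_singleton_iff.2 ⟨hw.occursAt_iff.2 h, rfl⟩⟩

theorem letter_after_mem_Eminus (hclosed : ClosedUnderReversal u) (hw : OccursAt u w i₀)
    (h : WindowRev u w.length i₀ t) : u (t + w.length) ∈ Eminus u w := by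
  rw [Eminus, Set.mem_ofPred_eq, ← hclosed.reverse_mem_iff, List.reverse_cons]
  exact ⟨t, occursAt_append_singleton_iff.2 ⟨hw.occursAt_reverse_iff.2 h, by simp⟩⟩

theorem mem_Eboth_iff (hclosed : ClosedUnderReversal u) (hw : OccursAt u w i₀) :
    (a, b) ∈ Eboth u w ↔
      ∃ p, Realizes u w.length (WindowEq u w.length i₀) (WindowRev u w.length i₀) a b p := by
  have hX : a :: (w ++ [b]) ∈ Lang u ↔
      ∃ p, WindowEq u w.length i₀ (p + 1) ∧ u p = a ∧ u (p + 1 + w.length) = b := by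
    simp only [Lang, Set.mem_ofPred_eq, occursAt_cons_iff, occursAt_append_singleton_iff,
      hw.occursAt_iff]
    grind
  have hY : (a :: (w ++ [b])).reverse ∈ Lang u ↔
      ∃ p, WindowRev u w.length i₀ (p + 1) ∧ u p = b ∧ u (p + 1 + w.length) = a := by
    simp only [List.reverse_cons, List.reverse_append, List.reverse_nil, List.nil_append,
      List.singleton_append, Lang, Set.mem_ofPred_eq, occursAt_cons_iff,
      occursAt_append_singleton_iff, hw.occursAt_reverse_iff]
    grind
  refine ⟨fun h => (hX.1 h).imp fun _ => Or.inl, fun ⟨p, hp⟩ => ?_⟩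
  rcases hp with hp | hp
  · exact hX.2 ⟨p, hp⟩
  · exact hclosed.reverse_mem_iff.1 (hY.2 ⟨p, hp⟩)

end Extensions

section GammaGraph

theorem gammaGraph_adj_inl_inr {a : Eminus u w} {b : Eplus u w} :
    (GammaGraph u w).Adj (.inl a) (.inr b) ↔ ((a : A), (b : A)) ∈ Eboth u w := by
  simp [GammaGraph]

theorem exists_of_gammaGraph_adj {x y : Eminus u w ⊕ Eplus u w} (h : (GammaGraph u w).Adj x y) :
    ∃ (a : Eminus u w) (b : Eplus u w), ((a : A), (b : A)) ∈ Eboth u w ∧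
      (x = .inl a ∧ y = .inr b ∨ x = .inr b ∧ y = .inl a) := by
  obtain ⟨-, ⟨a, b, rfl, rfl, hab⟩ | ⟨a, b, rfl, rfl, hab⟩⟩ := SimpleGraph.fromRel_adj _ _ _ |>.1 h
  · exact ⟨a, b, hab, .inl ⟨rfl, rfl⟩⟩
  · exact ⟨a, b, hab, .inr ⟨rfl, rfl⟩⟩

theorem not_windowEq_and_windowRev (hw : OccursAt u w i₀) (hnp : w.reverse ≠ w) (k : ℕ) :
    ¬ (WindowEq u w.length i₀ k ∧ WindowRev u w.length i₀ k) := fun h =>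
  hnp (hw.reverse_eq_self_iff.2 (h.1.trans_rev h.2.symm))

theorem gammaGraph_connected (hclosed : ClosedUnderReversal u)
    (hN : HasUnioccurrentPalSuffixes u w.length) (hw : OccursAt u w i₀) (hnp : w.reverse ≠ w) :
    (GammaGraph u w).Connected := by
  classical
  set n := w.length
  have P := OccurrencePair.of_window hN i₀
  have hne := not_windowEq_and_windowRev hw hnp
  have : Nonempty (Eminus u w ⊕ Eplus u w) :=
    ⟨.inr ⟨_, letter_after_mem_Eplus hw fun _ _ => rfl⟩⟩
  let f : ℕ → Eminus u w ⊕ Eplus u w := fun p =>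
    if hX : WindowEq u n i₀ (p + 1) then .inl ⟨u p, (mem_Eminus_iff hw).2 ⟨p, hX, rfl⟩⟩
    else if hY : WindowRev u n i₀ (p + 1) then .inr ⟨u p, (mem_Eplus_iff hclosed hw).2 ⟨p, hY, rfl⟩⟩
    else Classical.arbitrary _
  have hfX {p} (hX : WindowEq u n i₀ (p + 1)) :
      f p = .inl ⟨u p, (mem_Eminus_iff hw).2 ⟨p, hX, rfl⟩⟩ := dif_pos hX
  have hfY {p} (hY : WindowRev u n i₀ (p + 1)) :
      f p = .inr ⟨u p, (mem_Eplus_iff hclosed hw).2 ⟨p, hY, rfl⟩⟩ :=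
    (dif_neg fun hX => hne _ ⟨hX, hY⟩).trans (dif_pos hY)
  refine SimpleGraph.connected_of_reachable_consecutive
    (S := fun p => WindowEq u n i₀ (p + 1) ∨ WindowRev u n i₀ (p + 1)) f ?_
    fun p q hp hq hpq hbetween => ?_
  · rintro (⟨a, ha⟩ | ⟨b, hb⟩)
    · obtain ⟨p, hX, rfl⟩ := (mem_Eminus_iff hw).1 ha
      exact ⟨p, .inl hX, hfX hX⟩
    · obtain ⟨p, hY, rfl⟩ := (mem_Eplus_iff hclosed hw).1 hb
      exact ⟨p, .inr hY, hfY hY⟩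
  have hgap : Gap (WindowEq u n i₀) (WindowRev u n i₀) (p + 1) (q + 1) :=
    ⟨by omega, fun k hk1 hk2 => by
      obtain ⟨k, rfl⟩ : ∃ k', k = k' + 1 := ⟨k - 1, by omega⟩
      exact not_or.1 (hbetween k (by omega) (by omega))⟩
  rcases hp with hXp | hYp <;> rcases hq with hXq | hYq
  · exact absurd hgap (P.not_gap_X_X hne hXp hXq)
  · rw [hfX hXp, hfY hYq]
    refine (gammaGraph_adj_inl_inr.2 ((mem_Eboth_iff hclosed hw).2 ⟨p, .inl ?_⟩)).reachable
    exact ⟨hXp, rfl, P.letter_after_eq_of_gap hXp hYq hgap⟩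
  · rw [hfY hYp, hfX hXq]
    refine (gammaGraph_adj_inl_inr.2 ((mem_Eboth_iff hclosed hw).2 ⟨p, .inr ?_⟩)).reachable.symm
    exact ⟨hYp, rfl, P.symm.letter_after_eq_of_gap hYp hXq hgap.symm⟩
  · exact absurd hgap.symm (P.symm.not_gap_X_X (fun k hk => hne k hk.symm) hYp hYq)

open Classical in
/-- The label of the edge `{a, b}` of `Γ(w)`: whichever of `a`, `b` is the letter following the
first occurrence of `w` or `w̃` realizing the edge. -/
noncomputable def gammaLabel (u : ℕ → A) (w : List A) (i₀ : ℕ) (a : Eminus u w) (b : Eplus u w) :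
    Eminus u w ⊕ Eplus u w :=
  if WindowEq u w.length i₀
      (firstRealization u w.length (WindowEq u w.length i₀) (WindowRev u w.length i₀) a b + 1)
  then .inr b else .inl a

theorem gammaLabel_cases (hclosed : ClosedUnderReversal u) (hw : OccursAt u w i₀)
    (hnp : w.reverse ≠ w) {a : Eminus u w} {b : Eplus u w} (hab : ((a : A), (b : A)) ∈ Eboth u w) :
    ∃ p, firstRealization u w.length (WindowEq u w.length i₀) (WindowRev u w.length i₀) a b = p ∧
      (WindowEq u w.length i₀ (p + 1) ∧ u p = a ∧ u (p + 1 + w.length) = b ∧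
          gammaLabel u w i₀ a b = .inr b ∨
        WindowRev u w.length i₀ (p + 1) ∧ ¬ WindowEq u w.length i₀ (p + 1) ∧ u p = b ∧
          u (p + 1 + w.length) = a ∧ gammaLabel u w i₀ a b = .inl a) := by
  have hr := realizes_firstRealization ((mem_Eboth_iff hclosed hw).1 hab)
  refine ⟨_, rfl, ?_⟩
  by_cases hX : WindowEq u w.length i₀
      (firstRealization u w.length (WindowEq u w.length i₀) (WindowRev u w.length i₀) a b + 1)
  · obtain ⟨-, ha, hb⟩ := hr.resolve_right fun h => not_windowEq_and_windowRev hw hnp _ ⟨hX, h.1⟩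
    exact .inl ⟨hX, ha, hb, if_pos hX⟩
  · obtain ⟨hY, hb, ha⟩ := hr.resolve_left fun h => hX h.1
    exact .inr ⟨hY, hX, hb, ha, if_neg hX⟩

theorem eq_of_gammaLabel_eq (hclosed : ClosedUnderReversal u)
    (hN : HasUnioccurrentPalSuffixes u w.length) (hw : OccursAt u w i₀) (hnp : w.reverse ≠ w)
    {a a' : Eminus u w} {b b' : Eplus u w} (hab : ((a : A), (b : A)) ∈ Eboth u w)
    (hab' : ((a' : A), (b' : A)) ∈ Eboth u w)
    (h : gammaLabel u w i₀ a b = gammaLabel u w i₀ a' b') : a = a' ∧ b = b' := by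
  have P := OccurrencePair.of_window hN i₀
  have hne := not_windowEq_and_windowRev hw hnp
  obtain ⟨p, hp, ⟨hX, ha, hb, hl⟩ | ⟨hY, hX, hb, ha, hl⟩⟩ := gammaLabel_cases hclosed hw hnp hab <;>
  obtain ⟨p', hp', ⟨hX', ha', hb', hl'⟩ | ⟨hY', hX', hb', ha', hl'⟩⟩ :=
    gammaLabel_cases hclosed hw hnp hab' <;>
  rw [hl, hl'] at h <;> simp only [Sum.inr.injEq, Sum.inl.injEq, reduceCtorEq] at h <;> subst h
  · have hpp := P.eq_of_firstRealization (c := b) (by rwa [ha]) (by rwa [ha']) hX hX' hb hb'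
      (fun h => hne _ ⟨hX, h.1⟩) (fun h => hne _ ⟨hX', h.1⟩)
    exact ⟨Subtype.ext (ha.symm.trans (hpp ▸ ha')), rfl⟩
  · have hpp := P.symm.eq_of_firstRealization (c := a) (by rwa [hb, firstRealization_swap])
      (by rwa [hb', firstRealization_swap]) hY hY' ha ha' (fun h => hX h.1) (fun h => hX' h.1)
    exact ⟨rfl, Subtype.ext (hb.symm.trans (hpp ▸ hb'))⟩

/-- The letter next to the first occurrence of `w` or `w̃` in `u` labels no edge. -/
theorem exists_forall_gammaLabel_ne (hclosed : ClosedUnderReversal u)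
    (hN : HasUnioccurrentPalSuffixes u w.length) (hw : OccursAt u w i₀) (hnp : w.reverse ≠ w) :
    ∃ v₀, ∀ (a : Eminus u w) (b : Eplus u w), ((a : A), (b : A)) ∈ Eboth u w →
      gammaLabel u w i₀ a b ≠ v₀ := by
  classical
  set n := w.length
  have P := OccurrencePair.of_window hN i₀
  have hne := not_windowEq_and_windowRev hw hnp
  have hex : ∃ t, WindowEq u n i₀ t ∨ WindowRev u n i₀ t := ⟨i₀, .inl fun _ _ => rfl⟩
  have hbefore : ∀ k < Nat.find hex, ¬ (WindowEq u n i₀ k ∨ WindowRev u n i₀ k) :=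
    fun k => Nat.find_min hex
  rcases h₀ : Nat.find hex with _ | p₀ <;> rcases h₀ ▸ Nat.find_spec hex with hX₀ | hY₀
  · refine ⟨.inr ⟨u n, by simpa using letter_after_mem_Eplus hw hX₀⟩, fun a b hab hl => ?_⟩
    obtain ⟨p, hp, ⟨hX, ha, hb, hl'⟩ | ⟨-, -, -, -, hl'⟩⟩ :=
      gammaLabel_cases hclosed hw hnp hab <;> rw [hl'] at hl <;>
      simp only [Sum.inr.injEq, reduceCtorEq] at hl
    refine P.firstRealization_ne_of_X_le hX hX₀ p.zero_le (by rw [zero_add, hb, hl])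
      (fun h => hne _ ⟨hX, h.1⟩) ?_
    rwa [ha, hb]
  · refine ⟨.inl ⟨u n, by simpa using letter_after_mem_Eminus hclosed hw hY₀⟩,
      fun a b hab hl => ?_⟩
    obtain ⟨p, hp, ⟨-, -, -, hl'⟩ | ⟨hY, hX, hb, ha, hl'⟩⟩ :=
      gammaLabel_cases hclosed hw hnp hab <;> rw [hl'] at hl <;>
      simp only [Sum.inl.injEq, reduceCtorEq] at hl
    refine P.symm.firstRealization_ne_of_X_le hY hY₀ p.zero_le (by rw [zero_add, ha, hl])
      (fun h => hX h.1) ?_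
    rwa [hb, ha, firstRealization_swap]
  · refine ⟨.inl ⟨u p₀, (mem_Eminus_iff hw).2 ⟨p₀, hX₀, rfl⟩⟩, fun a b hab hl => ?_⟩
    obtain ⟨p, hp, ⟨-, -, -, hl'⟩ | ⟨hY, hX, hb, ha, hl'⟩⟩ :=
      gammaLabel_cases hclosed hw hnp hab <;> rw [hl'] at hl <;>
      simp only [Sum.inl.injEq, reduceCtorEq] at hl
    have hp₀ : p₀ ≤ p := not_lt.1 fun h => hbefore (p + 1) (by omega) (.inr hY)
    refine P.firstRealization_ne_of_X_succ_le hX₀ hp₀ hY (by rw [ha, hl]) (fun h => hX h.1) ?_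
    rwa [hb, show u p₀ = a by rw [hl]]
  · refine ⟨.inr ⟨u p₀, (mem_Eplus_iff hclosed hw).2 ⟨p₀, hY₀, rfl⟩⟩, fun a b hab hl => ?_⟩
    obtain ⟨p, hp, ⟨hX, ha, hb, hl'⟩ | ⟨-, -, -, -, hl'⟩⟩ :=
      gammaLabel_cases hclosed hw hnp hab <;> rw [hl'] at hl <;>
      simp only [Sum.inr.injEq, reduceCtorEq] at hl
    have hp₀ : p₀ ≤ p := not_lt.1 fun h => hbefore (p + 1) (by omega) (.inl hX)
    refine P.symm.firstRealization_ne_of_X_succ_le hY₀ hp₀ hX (by rw [hb, hl])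
      (fun h => hne _ ⟨hX, h.1⟩) ?_
    rwa [ha, show u p₀ = b by rw [hl], firstRealization_swap]

theorem gammaGraph_isTree [Finite A] (hclosed : ClosedUnderReversal u)
    (hN : HasUnioccurrentPalSuffixes u w.length) (hw : OccursAt u w i₀) (hnp : w.reverse ≠ w) :
    (GammaGraph u w).IsTree := by
  obtain ⟨v₀, hv₀⟩ := exists_forall_gammaLabel_ne hclosed hN hw hnp
  let f : Eminus u w ⊕ Eplus u w → Eminus u w ⊕ Eplus u w → Eminus u w ⊕ Eplus u w
    | .inl a, .inr b | .inr b, .inl a => gammaLabel u w i₀ a b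
    | x, _ => x
  refine (gammaGraph_connected hclosed hN hw hnp).isTree_of_edgeLabel f v₀
    (fun x y hxy => ?_) fun x y x' y' hxy hxy' hf => ?_
  · obtain ⟨a, b, hab, ⟨rfl, rfl⟩ | ⟨rfl, rfl⟩⟩ := exists_of_gammaGraph_adj hxy <;>
      exact hv₀ a b hab
  · obtain ⟨a, b, hab, ⟨rfl, rfl⟩ | ⟨rfl, rfl⟩⟩ := exists_of_gammaGraph_adj hxy <;>
    obtain ⟨a', b', hab', ⟨rfl, rfl⟩ | ⟨rfl, rfl⟩⟩ := exists_of_gammaGraph_adj hxy' <;>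
    obtain ⟨rfl, rfl⟩ := eq_of_gammaLabel_eq hclosed hN hw hnp hab hab' hf <;>
    simp [Sym2.eq_swap]

end GammaGraph

section ThetaGraph

theorem thetaGraph_adj_iff (hclosed : ClosedUnderReversal u) (hw : OccursAt u w i₀)
    (hp : w.reverse = w) {a b : Eminus u w} :
    (ThetaGraph u w).Adj a b ↔
      a ≠ b ∧ ∃ p, Realizes u w.length (WindowEq u w.length i₀) (WindowEq u w.length i₀) a b p := by
  simp only [ThetaGraph, SimpleGraph.fromRel_adj, mem_Eboth_iff hclosed hw,
    (hw.reverse_eq_self_iff.1 hp).windowRev_eq, ← realizes_swap (a := (b : A)), or_self]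

theorem thetaGraph_connected (hclosed : ClosedUnderReversal u)
    (hN : HasUnioccurrentPalSuffixes u w.length) (hw : OccursAt u w i₀) (hp : w.reverse = w) :
    (ThetaGraph u w).Connected := by
  classical
  set n := w.length
  have hpal := hw.reverse_eq_self_iff.1 hp
  have P := OccurrencePair.of_windowPal hN hpal
  have : Nonempty (Eminus u w) := ⟨⟨_, letter_after_mem_Eminus hclosed hw hpal⟩⟩
  let f : ℕ → Eminus u w := fun p =>
    if hX : WindowEq u n i₀ (p + 1) then ⟨u p, (mem_Eminus_iff hw).2 ⟨p, hX, rfl⟩⟩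
    else Classical.arbitrary _
  have hf {p} (hX : WindowEq u n i₀ (p + 1)) : f p = ⟨u p, (mem_Eminus_iff hw).2 ⟨p, hX, rfl⟩⟩ :=
    dif_pos hX
  refine SimpleGraph.connected_of_reachable_consecutive (S := fun p => WindowEq u n i₀ (p + 1)) f
    (fun ⟨a, ha⟩ => ?_) fun p q hXp hXq hpq hbetween => ?_
  · obtain ⟨p, hX, rfl⟩ := (mem_Eminus_iff hw).1 ha
    exact ⟨p, hX, hf hX⟩
  have hgap : Gap (WindowEq u n i₀) (WindowEq u n i₀) (p + 1) (q + 1) :=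
    ⟨by omega, fun k hk1 hk2 => by
      obtain ⟨k, rfl⟩ : ∃ k', k = k' + 1 := ⟨k - 1, by omega⟩
      have := hbetween k (by omega) (by omega)
      exact ⟨this, this⟩⟩
  rw [hf hXp, hf hXq]
  by_cases hpq : u p = u q
  · simp only [hpq]
    rfl
  · refine SimpleGraph.Adj.reachable ((thetaGraph_adj_iff hclosed hw hp).2 ⟨?_, p, .inl ?_⟩)
    · simpa using hpq
    · exact ⟨hXp, rfl, P.letter_after_eq_of_gap hXp hXq hgap⟩

open Classical in
noncomputable def thetaLabel (u : ℕ → A) (w : List A) (i₀ : ℕ) (a b : Eminus u w) :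
    Eminus u w :=
  let c := u (firstRealization u w.length (WindowEq u w.length i₀) (WindowEq u w.length i₀) a b
    + 1 + w.length)
  if h : c ∈ Eminus u w then ⟨c, h⟩ else a

theorem thetaLabel_spec (hclosed : ClosedUnderReversal u) (hw : OccursAt u w i₀)
    (hp : w.reverse = w) {a b : Eminus u w} (hab : (ThetaGraph u w).Adj a b) :
    ∃ p, WindowEq u w.length i₀ (p + 1) ∧
      firstRealization u w.length (WindowEq u w.length i₀) (WindowEq u w.length i₀) (u p)
        (u (p + 1 + w.length)) = p ∧
      u p ≠ u (p + 1 + w.length) ∧ (thetaLabel u w i₀ a b : A) = u (p + 1 + w.length) ∧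
      s((a : A), (b : A)) = s(u p, u (p + 1 + w.length)) := by
  obtain ⟨hne, hex⟩ := (thetaGraph_adj_iff hclosed hw hp).1 hab
  have hne : (a : A) ≠ b := fun h => hne (Subtype.ext h)
  have hr := realizes_firstRealization hex
  set p := firstRealization u w.length (WindowEq u w.length i₀) (WindowEq u w.length i₀) a b
  have hX : WindowEq u w.length i₀ (p + 1) := hr.elim (·.1) (·.1)
  have hmem := letter_after_mem_Eminus hclosed hw ((hw.reverse_eq_self_iff.1 hp).trans_eq hX)
  have hlabel : (thetaLabel u w i₀ a b : A) = u (p + 1 + w.length) := by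
    simp only [thetaLabel, dif_pos hmem, p]
  rcases hr with ⟨-, ha, hb⟩ | ⟨-, hb, ha⟩
  · exact ⟨p, hX, by rw [ha, hb], by rwa [ha, hb], hlabel, by rw [ha, hb]⟩
  · exact ⟨p, hX, by rw [ha, hb, ← firstRealization_swap], by rw [ha, hb]; exact hne.symm,
      hlabel, by rw [ha, hb, Sym2.eq_swap]⟩

theorem eq_of_thetaLabel_eq (hclosed : ClosedUnderReversal u)
    (hN : HasUnioccurrentPalSuffixes u w.length) (hw : OccursAt u w i₀) (hp : w.reverse = w)
    {a b a' b' : Eminus u w} (hab : (ThetaGraph u w).Adj a b) (hab' : (ThetaGraph u w).Adj a' b')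
    (h : thetaLabel u w i₀ a b = thetaLabel u w i₀ a' b') : s(a, b) = s(a', b') := by
  have P := OccurrencePair.of_windowPal hN (hw.reverse_eq_self_iff.1 hp)
  obtain ⟨p, hX, hfirst, hne, hl, he⟩ := thetaLabel_spec hclosed hw hp hab
  obtain ⟨p', hX', hfirst', hne', hl', he'⟩ := thetaLabel_spec hclosed hw hp hab'
  have hc : u (p' + 1 + w.length) = u (p + 1 + w.length) := by rw [← hl, ← hl', h]
  rw [hc] at hfirst' hne' he'
  obtain rfl := P.eq_of_firstRealization hfirst hfirst' hX hX' rfl hc (fun h => hne h.2)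
    fun h => hne' h.2
  apply Sym2.map.injective Subtype.val_injective
  simp only [Sym2.map_mk, he, he']

theorem exists_forall_thetaLabel_ne (hclosed : ClosedUnderReversal u)
    (hN : HasUnioccurrentPalSuffixes u w.length) (hw : OccursAt u w i₀) (hp : w.reverse = w) :
    ∃ v₀, ∀ a b, (ThetaGraph u w).Adj a b → thetaLabel u w i₀ a b ≠ v₀ := by
  classical
  set n := w.length
  have hpal := hw.reverse_eq_self_iff.1 hp
  have P := OccurrencePair.of_windowPal hN hpal
  have hex : ∃ t, WindowEq u n i₀ t := ⟨i₀, fun _ _ => rfl⟩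
  rcases h₀ : Nat.find hex with _ | p₀ <;> have hX₀ := h₀ ▸ Nat.find_spec hex
  · refine ⟨⟨u n, by simpa using letter_after_mem_Eminus hclosed hw (hpal.trans_eq hX₀)⟩,
      fun a b hab hl => ?_⟩
    obtain ⟨p, hX, hfirst, hne, hl', -⟩ := thetaLabel_spec hclosed hw hp hab
    exact P.firstRealization_ne_of_X_le hX hX₀ p.zero_le (by rw [zero_add, ← hl', hl])
      (fun h => hne h.2) hfirst
  · refine ⟨⟨u p₀, (mem_Eminus_iff hw).2 ⟨p₀, hX₀, rfl⟩⟩, fun a b hab hl => ?_⟩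
    obtain ⟨p, hX, hfirst, hne, hl', -⟩ := thetaLabel_spec hclosed hw hp hab
    have hc : u (p + 1 + n) = u p₀ := by rw [← hl', hl]
    have hp₀ : p₀ ≤ p := not_lt.1 fun h => Nat.find_min hex (by omega : p + 1 < Nat.find hex) hX
    refine P.firstRealization_ne_of_X_succ_le hX₀ hp₀ hX hc (fun h => hne h.2) ?_
    rwa [← hc, firstRealization_swap]

theorem thetaGraph_isTree [Finite A] (hclosed : ClosedUnderReversal u)
    (hN : HasUnioccurrentPalSuffixes u w.length) (hw : OccursAt u w i₀) (hp : w.reverse = w) :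
    (ThetaGraph u w).IsTree := by
  obtain ⟨v₀, hv₀⟩ := exists_forall_thetaLabel_ne hclosed hN hw hp
  exact (thetaGraph_connected hclosed hN hw hp).isTree_of_edgeLabel (thetaLabel u w i₀) v₀ hv₀
    fun _ _ _ _ hab hab' h => eq_of_thetaLabel_eq hclosed hN hw hp hab hab' h

end ThetaGraph

end Factor

end ZDC

open ZDC in
/-- If `L(u)` is closed under reversal and `D(u) < +∞`, then there is a
positive integer `K` such that for every factor `w` of length at least `K`, the graph
`Γ(w)` is a tree if `w` is not a palindrome, and `Θ(w)` is a tree if `w` is a palindrome. -/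
theorem stmt_5 {A : Type*} [Fintype A] (u : ℕ → A)
    (hclosed : ClosedUnderReversal u) (hfin : Defect u ≠ ⊤) :
    ∃ K : ℕ, 0 < K ∧ ∀ w ∈ Lang u, K ≤ w.length →
      (w.reverse ≠ w → (GammaGraph u w).IsTree) ∧
      (w.reverse = w → (ThetaGraph u w).IsTree) := by
  obtain ⟨N, hN⟩ := exists_hasUnioccurrentPalSuffixes hfin
  refine ⟨N + 1, N.succ_pos, fun w ⟨i₀, hw⟩ hlen => ?_⟩
  have hN' := hN.mono (show N ≤ w.length by omega)
  exact ⟨gammaGraph_isTree hclosed hN' hw, thetaGraph_isTree hclosed hN' hw⟩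
end

section
/- Let u be an infinite word over a finite alphabet A whose language L(u) is closed under reversal, and let w ∈ L(u) be a palindrome (w = w̃). If the graph Θ(w) is connected, then m(w) ≥ #E⁼(w) − 1; moreover, m(w) > #E⁼(w) − 1 if and only if Θ(w) contains a cycle, and m(w) = #E⁼(w) − 1 if and only if Θ(w) is a tree. -/
/-!
Because `w` is a palindrome and `L(u)` is closed under reversal, `E⁺(w) = E⁻(w)` and `E(w)` is
symmetric. The diagonal of `E(w)` is `E⁼(w)`, and every edge of `Θ(w)` accounts for exactly two
off-diagonal pairs, so `m(w) - (#E⁼(w) - 1) = 2 (#edges - #vertices + 1)`. For a connected graph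
this is nonnegative and vanishes exactly when the graph is a tree.
-/

namespace SimpleGraph

variable {V : Type*} {G : SimpleGraph V}

theorem natCard_dart_eq_twice_natCard_edgeSet [Finite V] :
    Nat.card G.Dart = 2 * Nat.card G.edgeSet := by
  classical
  have := Fintype.ofFinite V
  rw [Nat.card_eq_fintype_card, dart_card_eq_twice_card_edges, Nat.card_eq_fintype_card,
    edgeFinset_card]

theorem Connected.isAcyclic_iff_card_edgeSet [Finite V] (h : G.Connected) :
    G.IsAcyclic ↔ Nat.card G.edgeSet + 1 = Nat.card V := by
  simpa [isTree_iff, h] using isTree_iff_connected_and_card (G := G)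

end SimpleGraph

namespace ZDC

open SimpleGraph

variable {A : Type*} {u : ℕ → A} {w : List A}

theorem mem_Lang_of_isPrefix {v x : List A} (hvx : v <+: x) (hx : x ∈ Lang u) : v ∈ Lang u := by
  obtain ⟨i, hocc⟩ := hx
  obtain ⟨t, rfl⟩ := hvx
  have h := congrArg (List.take v.length) hocc
  rw [List.take_left] at h
  refine ⟨i, h.trans ?_⟩
  rw [factorAt, factorAt, ← List.map_take, List.take_range, Nat.min_eq_left (by simp)]

theorem fst_mem_Eminus {p : A × A} (h : p ∈ Eboth u w) : p.1 ∈ Eminus u w :=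
  mem_Lang_of_isPrefix ⟨[p.2], by simp⟩ h

theorem Eplus_eq_Eminus (hclosed : ClosedUnderReversal u) (hpal : w.reverse = w) :
    Eplus u w = Eminus u w := by
  ext a
  simp only [Eplus, Eminus, Set.mem_ofPred_eq]
  constructor
  · intro h
    simpa [hpal] using hclosed (w ++ [a]) h
  · intro h
    simpa [hpal] using hclosed (a :: w) h

theorem swap_mem_Eboth (hclosed : ClosedUnderReversal u) (hpal : w.reverse = w)
    {p : A × A} (h : p ∈ Eboth u w) : p.swap ∈ Eboth u w := by
  simpa [Eboth, hpal] using hclosed _ h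

theorem thetaGraph_adj (hclosed : ClosedUnderReversal u) (hpal : w.reverse = w)
    {a b : Eminus u w} :
    (ThetaGraph u w).Adj a b ↔ a ≠ b ∧ ((a : A), (b : A)) ∈ Eboth u w := by
  rw [ThetaGraph, fromRel_adj]
  exact and_congr_right fun _ => ⟨fun h => h.elim id (swap_mem_Eboth hclosed hpal), Or.inl⟩

def offDiagEbothEquivDart (hclosed : ClosedUnderReversal u) (hpal : w.reverse = w) :
    ↥(Eboth u w \ Set.diagonal A) ≃ (ThetaGraph u w).Dart where
  toFun p :=
    ⟨(⟨p.1.1, fst_mem_Eminus p.2.1⟩,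
        ⟨p.1.2, fst_mem_Eminus (swap_mem_Eboth hclosed hpal p.2.1)⟩),
      (thetaGraph_adj hclosed hpal).2 ⟨fun h => p.2.2 (congrArg Subtype.val h), p.2.1⟩⟩
  invFun d :=
    ⟨((d.fst : A), (d.snd : A)),
      ((thetaGraph_adj hclosed hpal).1 d.adj).2,
      fun h => ((thetaGraph_adj hclosed hpal).1 d.adj).1 (Subtype.ext h)⟩
  left_inv _ := rfl
  right_inv _ := rfl

theorem Eboth_inter_diagonal : Eboth u w ∩ Set.diagonal A = (fun a => (a, a)) '' Esym u w := by
  ext ⟨a, b⟩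
  constructor
  · rintro ⟨h, rfl : a = b⟩
    exact ⟨a, h, rfl⟩
  · rintro ⟨c, hc, h⟩
    obtain ⟨rfl, rfl⟩ := Prod.ext_iff.1 h
    exact ⟨hc, rfl⟩

theorem ncard_Eboth [Finite A] (hclosed : ClosedUnderReversal u) (hpal : w.reverse = w) :
    (Eboth u w).ncard = (Esym u w).ncard + 2 * Nat.card (ThetaGraph u w).edgeSet := by
  rw [← Set.ncard_inter_add_ncard_sdiff_eq_ncard (Eboth u w) (Set.diagonal A),
    Eboth_inter_diagonal, Set.ncard_image_of_injective _ fun a b h => (Prod.ext_iff.1 h).1,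
    ← Nat.card_coe_set_eq (_ \ _), Nat.card_congr (offDiagEbothEquivDart hclosed hpal),
    natCard_dart_eq_twice_natCard_edgeSet]

theorem mult_eq [Finite A] (hclosed : ClosedUnderReversal u) (hpal : w.reverse = w) :
    mult u w = ((Esym u w).ncard : ℤ) - 1 +
      2 * ((Nat.card (ThetaGraph u w).edgeSet : ℤ) + 1 - Nat.card (Eminus u w)) := by
  rw [mult, Eplus_eq_Eminus hclosed hpal, ncard_Eboth hclosed hpal]
  simp only [Nat.card_coe_set_eq]
  push_cast
  ring

end ZDC

open ZDC in
theorem stmt_9_general {A : Type*} [Fintype A] (u : ℕ → A) (w : List A)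
    (hclosed : ClosedUnderReversal u) (hpal : w.reverse = w)
    (hconn : (ThetaGraph u w).Connected) :
    ((Esym u w).ncard : ℤ) - 1 ≤ mult u w ∧
    (((Esym u w).ncard : ℤ) - 1 < mult u w ↔ ¬ (ThetaGraph u w).IsAcyclic) ∧
    (mult u w = ((Esym u w).ncard : ℤ) - 1 ↔ (ThetaGraph u w).IsTree) := by
  have hle := hconn.card_vert_le_card_edgeSet_add_one
  have hacyc := hconn.isAcyclic_iff_card_edgeSet
  rw [mult_eq hclosed hpal, SimpleGraph.isTree_iff, and_iff_right hconn, hacyc]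
  omega

open ZDC in
/-- Suppose `L(u)` is closed under reversal and `w` is a palindromic
factor. If `Θ(w)` is connected, then `m(w) ≥ #E⁼(w) − 1`; moreover `m(w) > #E⁼(w) − 1`
iff `Θ(w)` contains a cycle and `m(w) = #E⁼(w) − 1` iff `Θ(w)` is a tree. -/
theorem stmt_9 {A : Type*} [Fintype A] (u : ℕ → A) (w : List A)
    (hclosed : ClosedUnderReversal u) (hw : w ∈ Lang u) (hpal : w.reverse = w)
    (hconn : (ThetaGraph u w).Connected) :
    ((Esym u w).ncard : ℤ) - 1 ≤ mult u w ∧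
    (((Esym u w).ncard : ℤ) - 1 < mult u w ↔ ¬ (ThetaGraph u w).IsAcyclic) ∧
    (mult u w = ((Esym u w).ncard : ℤ) - 1 ↔ (ThetaGraph u w).IsTree) :=
  stmt_9_general u w hclosed hpal hconn
end

section
/- Let u be an infinite word over a finite alphabet A. Then D(u) = 0 if and only if for every palindromic factor w ∈ L(u), all complete return words to w in u are palindromes. -/
namespace StmtAux
open ZDC

variable {A : Type*}

def PalSet (w : List A) : Set (List A) := {v | v <:+: w ∧ v.reverse = v}

lemma palCount_eq (w : List A) : palCount w = (PalSet w).ncard := rfl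

lemma finite_palSet (w : List A) : (PalSet w).Finite := by
  apply Set.Finite.subset (List.finite_toSet w.sublists)
  intro v hv
  simpa [List.mem_sublists] using hv.1.sublist

lemma palSet_mono {v w : List A} (h : v <:+: w) : PalSet v ⊆ PalSet w :=
  fun x hx => ⟨hx.1.trans h, hx.2⟩

lemma palCount_nil : palCount ([] : List A) = 1 := by
  have h : PalSet ([] : List A) = {[]} := by
    ext v
    simp only [PalSet, Set.mem_setOf_eq, List.infix_nil, Set.mem_singleton_iff]
    exact ⟨fun h => h.1, fun h => ⟨h, by simp [h]⟩⟩
  rw [palCount_eq, h, Set.ncard_singleton]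

lemma suffix_of_suffix_length_le {p q w : List A} (hp : p <:+ w) (hq : q <:+ w)
    (h : q.length ≤ p.length) : q <:+ p := by
  rw [← List.reverse_prefix] at hp hq ⊢
  exact List.prefix_of_prefix_length_le hq hp (by simpa using h)

lemma suffix_eq_of_length {p q w : List A} (hp : p <:+ w) (hq : q <:+ w)
    (h : q.length = p.length) : q = p := by
  obtain ⟨t, ht⟩ := suffix_of_suffix_length_le hp hq h.le
  have ht' : t = [] := by
    have hl := congrArg List.length ht
    rw [List.length_append, h] at hl
    exact List.length_eq_zero_iff.mp (by omega)
  simpa [ht'] using ht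

lemma prefix_dropLast_of_lt {v w : List A} (h : v <+: w) (hlt : v.length < w.length) :
    v <+: w.dropLast := by
  rw [List.prefix_iff_eq_take] at h ⊢
  rw [List.dropLast_eq_take, List.take_take]
  have : v.length ⊓ (w.length - 1) = v.length := by omega
  rw [this]
  exact h

lemma dropLast_suffix_dropLast {p w : List A} (hp : p <:+ w) (hne : p ≠ []) :
    p.dropLast <:+ w.dropLast := by
  rcases hp with ⟨t, rfl⟩
  rw [List.dropLast_append_of_ne_nil hne]
  exact ⟨t, rfl⟩

lemma shorter_palsuffix_infix_dropLast {p q w : List A}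
    (hp : p <:+ w) (hpal : p.reverse = p) (hq : q <:+ w) (hqal : q.reverse = q)
    (hlt : q.length < p.length) : q <:+: w.dropLast := by
  have hqp : q <:+ p := suffix_of_suffix_length_le hp hq hlt.le
  have hq' : q <+: p := by
    have h2 := List.reverse_prefix.mpr hqp
    rwa [hpal, hqal] at h2
  have h3 : q <+: p.dropLast := prefix_dropLast_of_lt hq' hlt
  have h4 : p.dropLast <:+ w.dropLast :=
    dropLast_suffix_dropLast hp (by intro h; simp [h] at hlt)
  exact List.infix_iff_prefix_suffix.mpr ⟨p.dropLast, h3, h4⟩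

lemma suffix_of_infix_not_infix_dropLast {v w : List A}
    (h : v <:+: w) (h2 : ¬ v <:+: w.dropLast) : v <:+ w := by
  rcases h with ⟨s, t, rfl⟩
  rcases eq_or_ne t [] with rfl | hne
  · exact ⟨s, by simp⟩
  · exfalso
    apply h2
    refine ⟨s, t.dropLast, ?_⟩
    rw [show s ++ v ++ t = (s ++ v) ++ t by simp,
      List.dropLast_append_of_ne_nil hne, List.append_assoc]

def NewPals (w : List A) : Set (List A) :=
  {p | p <:+ w ∧ p.reverse = p ∧ ¬ p <:+: w.dropLast}

lemma newPals_subsingleton {w : List A} {p q : List A}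
    (hp : p ∈ NewPals w) (hq : q ∈ NewPals w) : p = q := by
  rcases lt_trichotomy p.length q.length with h | h | h
  · exact absurd (shorter_palsuffix_infix_dropLast hq.1 hq.2.1 hp.1 hp.2.1 h) hp.2.2
  · exact suffix_eq_of_length hq.1 hp.1 h
  · exact absurd (shorter_palsuffix_infix_dropLast hp.1 hp.2.1 hq.1 hq.2.1 h) hq.2.2

lemma palSet_subset_step (w : List A) {p : List A} (hp : p ∈ NewPals w) :
    PalSet w ⊆ insert p (PalSet w.dropLast) := by
  intro v hv
  by_cases h : v <:+: w.dropLast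
  · exact Set.mem_insert_of_mem _ ⟨h, hv.2⟩
  · have : v ∈ NewPals w := ⟨suffix_of_infix_not_infix_dropLast hv.1 h, hv.2, h⟩
    exact Set.mem_insert_iff.mpr (Or.inl (newPals_subsingleton this hp))

lemma palSet_eq_of_no_new {w : List A} (h : NewPals w = ∅) :
    PalSet w = PalSet w.dropLast := by
  apply Set.Subset.antisymm
  · intro v hv
    by_cases h2 : v <:+: w.dropLast
    · exact ⟨h2, hv.2⟩
    · exfalso
      have hmem : v ∈ NewPals w := ⟨suffix_of_infix_not_infix_dropLast hv.1 h2, hv.2, h2⟩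
      rw [h] at hmem
      exact hmem
  · exact palSet_mono ((List.dropLast_prefix w).isInfix)

lemma palCount_le_step (w : List A) : palCount w ≤ palCount w.dropLast + 1 := by
  by_cases h : NewPals w = ∅
  · rw [palCount_eq, palCount_eq, palSet_eq_of_no_new h]; omega
  · obtain ⟨p, hp⟩ := Set.nonempty_iff_ne_empty.mpr h
    rw [palCount_eq, palCount_eq]
    calc (PalSet w).ncard ≤ (insert p (PalSet w.dropLast)).ncard :=
          Set.ncard_le_ncard (palSet_subset_step w hp)
            ((finite_palSet _).insert p)
      _ ≤ (PalSet w.dropLast).ncard + 1 := Set.ncard_insert_le _ _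

lemma palCount_eq_of_no_new {w : List A} (h : NewPals w = ∅) :
    palCount w = palCount w.dropLast := by
  rw [palCount_eq, palCount_eq, palSet_eq_of_no_new h]

lemma palCount_succ_of_new {w : List A} (h : (NewPals w).Nonempty) :
    palCount w.dropLast + 1 ≤ palCount w := by
  obtain ⟨p, hp⟩ := h
  rw [palCount_eq, palCount_eq]
  have hsub : insert p (PalSet w.dropLast) ⊆ PalSet w := by
    intro v hv
    rcases Set.mem_insert_iff.mp hv with rfl | hv
    · exact ⟨hp.1.isInfix, hp.2.1⟩
    · exact palSet_mono ((List.dropLast_prefix w).isInfix) hv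
  have hnm : p ∉ PalSet w.dropLast := fun hmem => hp.2.2 hmem.1
  calc (PalSet w.dropLast).ncard + 1 = (insert p (PalSet w.dropLast)).ncard :=
        (Set.ncard_insert_of_notMem hnm (finite_palSet _)).symm
    _ ≤ (PalSet w).ncard := Set.ncard_le_ncard hsub (finite_palSet _)

lemma palCount_le (w : List A) : palCount w ≤ w.length + 1 := by
  induction w using List.reverseRecOn with
  | nil => simp [palCount_nil]
  | append_singleton v a ih =>
    have h := palCount_le_step (v ++ [a])
    rw [List.dropLast_concat] at h
    simp only [List.length_append, List.length_singleton]
    omega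

lemma palCount_prefix_le {v w : List A} (h : v <+: w) :
    palCount w ≤ palCount v + (w.length - v.length) := by
  induction w using List.reverseRecOn with
  | nil =>
    have : v = [] := List.prefix_nil.mp h
    subst this; simp
  | append_singleton w a ih =>
    by_cases hl : v.length = (w ++ [a]).length
    · rw [h.eq_of_length hl]; simp
    · have hlt : v.length < (w ++ [a]).length := lt_of_le_of_ne h.length_le hl
      have hv : v <+: w := by
        have h2 := prefix_dropLast_of_lt h hlt
        rwa [List.dropLast_concat] at h2
      have h2 := palCount_le_step (w ++ [a])
      rw [List.dropLast_concat] at h2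
      have h3 := ih hv
      have h4 := hv.length_le
      simp only [List.length_append, List.length_singleton] at *
      omega

lemma rich_of_newPals {w : List A}
    (h : ∀ v, v <+: w → v ≠ [] → (NewPals v).Nonempty) :
    palCount w = w.length + 1 := by
  induction w using List.reverseRecOn with
  | nil => simp [palCount_nil]
  | append_singleton v a ih =>
    have h1 := palCount_succ_of_new (h (v ++ [a]) List.prefix_rfl (by simp))
    rw [List.dropLast_concat] at h1
    have h2 := palCount_le_step (v ++ [a])
    rw [List.dropLast_concat] at h2
    have h3 := ih (fun x hx hxne => h x (hx.trans (v.prefix_append [a])) hxne)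
    simp only [List.length_append, List.length_singleton]
    omega

lemma newPals_of_rich {w : List A} (hrich : palCount w = w.length + 1) :
    ∀ v, v <+: w → v ≠ [] → (NewPals v).Nonempty := by
  intro v hv hne
  by_contra hemp
  rw [Set.not_nonempty_iff_eq_empty] at hemp
  have h1 : palCount v = palCount v.dropLast := palCount_eq_of_no_new hemp
  have h2 := palCount_le v.dropLast
  have h3 := palCount_prefix_le hv
  have h4 : v.dropLast.length = v.length - 1 := by simp
  have h5 : 0 < v.length := List.length_pos_iff.mpr hne
  have h6 : v.length ≤ w.length := hv.length_le
  omega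


lemma factorAt_length (u : ℕ → A) (i n : ℕ) : (factorAt u i n).length = n := by
  simp [factorAt]

lemma factorAt_getElem (u : ℕ → A) (i n j : ℕ) (h : j < (factorAt u i n).length) :
    (factorAt u i n)[j] = u (i + j) := by
  simp [factorAt]

lemma factorAt_take (u : ℕ → A) {i n m : ℕ} (h : m ≤ n) :
    (factorAt u i n).take m = factorAt u i m := by
  apply List.ext_getElem
  · simp [factorAt_length]; omega
  · intro j h1 h2
    rw [List.getElem_take, factorAt_getElem, factorAt_getElem]

lemma factorAt_drop (u : ℕ → A) (i n m : ℕ) :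
    (factorAt u i n).drop m = factorAt u (i + m) (n - m) := by
  apply List.ext_getElem
  · simp [factorAt_length]
  · intro j h1 h2
    rw [List.getElem_drop, factorAt_getElem, factorAt_getElem]
    congr 1
    omega

lemma occursAt_factorAt (u : ℕ → A) (i n : ℕ) : OccursAt u (factorAt u i n) i := by
  unfold OccursAt
  rw [factorAt_length]

lemma mem_lang_factorAt (u : ℕ → A) (i n : ℕ) : factorAt u i n ∈ Lang u :=
  ⟨i, occursAt_factorAt u i n⟩

lemma occursAt_of_eq {u : ℕ → A} {w : List A} {i m : ℕ} (h : w = factorAt u i m) :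
    OccursAt u w i := by
  have hl : w.length = m := by rw [h, factorAt_length]
  unfold OccursAt
  rw [hl]
  exact h

lemma occursAt_of_prefix {u : ℕ → A} {w v : List A} {i : ℕ}
    (hocc : OccursAt u v i) (hp : w <+: v) : OccursAt u w i := by
  rw [OccursAt] at hocc
  have h1 : w = v.take w.length := List.prefix_iff_eq_take.mp hp
  rw [hocc] at h1
  rw [factorAt_take u hp.length_le] at h1
  exact occursAt_of_eq h1

lemma occursAt_of_suffix {u : ℕ → A} {w v : List A} {i : ℕ}
    (hocc : OccursAt u v i) (hs : w <:+ v) : OccursAt u w (i + (v.length - w.length)) := by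
  rw [OccursAt] at hocc
  have hle := hs.length_le
  have h1 : w = v.drop (v.length - w.length) := List.suffix_iff_eq_drop.mp hs
  rw [hocc] at h1
  rw [factorAt_length, factorAt_drop, Nat.sub_sub_self hle] at h1
  exact occursAt_of_eq h1

lemma occursAt_of_infix {u : ℕ → A} {w : List A} {i n : ℕ} (hw : w <:+: factorAt u i n) :
    ∃ k, k + w.length ≤ n ∧ OccursAt u w (i + k) := by
  rcases hw with ⟨s, t, hst⟩
  refine ⟨s.length, ?_, ?_⟩
  · have hl := congrArg List.length hst
    simp [factorAt_length] at hl
    omega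
  · have hwlen : s.length + w.length ≤ n := by
      have hl := congrArg List.length hst
      simp [factorAt_length] at hl
      omega
    have h1 : w = ((factorAt u i n).drop s.length).take w.length := by
      rw [← hst, List.append_assoc, List.drop_left, List.take_left]
    rw [factorAt_drop, factorAt_take u (by omega)] at h1
    exact occursAt_of_eq h1

lemma lang_infix_closed {u : ℕ → A} {v w : List A} (hv : v <:+: w) (hw : w ∈ Lang u) :
    v ∈ Lang u := by
  obtain ⟨i, hocc⟩ := hw
  rw [OccursAt] at hocc
  rw [hocc] at hv
  obtain ⟨k, _, h⟩ := occursAt_of_infix hv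
  exact ⟨i + k, h⟩

lemma defect_eq_zero_iff (u : ℕ → A) :
    Defect u = 0 ↔ ∀ w ∈ Lang u, palCount w = w.length + 1 := by
  unfold Defect
  rw [show (0 : ℕ∞) = ⊥ from rfl, iSup_eq_bot]
  constructor
  · intro h w hw
    have h1 := h w
    rw [iSup_eq_bot] at h1
    have h2 := h1 hw
    rw [show (⊥ : ℕ∞) = 0 from rfl, Nat.cast_eq_zero] at h2
    unfold wordDefect at h2
    have := palCount_le w
    omega
  · intro h w
    rw [iSup_eq_bot]
    intro hw
    rw [show (⊥ : ℕ∞) = 0 from rfl, Nat.cast_eq_zero]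
    unfold wordDefect
    rw [h w hw]
    omega


theorem main_thm {A : Type*} (u : ℕ → A) :
    Defect u = 0 ↔
      ∀ w ∈ Lang u, w.reverse = w → ∀ r, IsCompleteReturn u w r → r.reverse = r := by
  classical
  constructor
  · -- defect zero implies complete returns to palindromes are palindromes
    intro hdef w _hw hpal r hret
    obtain ⟨i, j, hij, hwi, hwj, hmid, hr⟩ := hret
    set L := j + w.length - i with hL
    have hLlen : r.length = L := by rw [hr, factorAt_length]
    have hwL : w.length < L := by omega
    have hoccr : OccursAt u r i := by
      rw [hr]; exact occursAt_factorAt u i L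
    have hrLang : r ∈ Lang u := ⟨i, hoccr⟩
    have hrich := (defect_eq_zero_iff u).mp hdef r hrLang
    have hrne : r ≠ [] := by
      intro h
      rw [h] at hLlen
      simp at hLlen
      omega
    obtain ⟨p, hpsuf, hppal, hpnew⟩ := newPals_of_rich hrich r List.prefix_rfl hrne
    -- w is a prefix and a suffix of r
    have hwpre : w <+: r := by
      rw [List.prefix_iff_eq_take, hr, factorAt_take u (by omega)]
      exact hwi
    have hwsuf : w <:+ r := by
      rw [List.suffix_iff_eq_drop, hLlen, hr, factorAt_drop]
      have e1 : i + (L - w.length) = j := by omega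
      have e2 : L - (L - w.length) = w.length := by omega
      rw [e1, e2]
      exact hwj
    rcases lt_or_ge p.length r.length with hpr | hpr
    · exfalso
      rcases le_or_gt p.length w.length with hpw | hpw
      · -- p would be an infix of r.dropLast
        have h1 : p <:+ w := suffix_of_suffix_length_le hwsuf hpsuf hpw
        have h2 : w <+: r.dropLast := prefix_dropLast_of_lt hwpre (by omega)
        exact hpnew (h1.isInfix.trans h2.isInfix)
      · -- middle occurrence of w contradicting the return structure
        have h1 : w <:+ p := suffix_of_suffix_length_le hpsuf hwsuf hpw.le
        have h2 : w <+: p := by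
          have h3 := List.reverse_prefix.mpr h1
          rwa [hpal, hppal] at h3
        have hoccp : OccursAt u p (i + (r.length - p.length)) :=
          occursAt_of_suffix hoccr hpsuf
        have hoccw : OccursAt u w (i + (r.length - p.length)) :=
          occursAt_of_prefix hoccp h2
        refine hmid (i + (r.length - p.length)) ?_ ?_ hoccw
        · omega
        · omega
    · -- p = r, hence r is a palindrome
      have hpl : p.length = r.length := le_antisymm hpsuf.length_le hpr
      have : p = r := suffix_eq_of_length (List.suffix_rfl) hpsuf hpl
      rw [← this]
      exact hppal
  · -- complete-return condition implies defect zero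
    intro hret
    rw [defect_eq_zero_iff]
    intro w hw
    apply rich_of_newPals
    intro v hvw hvne
    obtain ⟨i, hocc⟩ := lang_infix_closed hvw.isInfix hw
    have hoccv := hocc
    rw [OccursAt] at hocc
    set n := v.length with hn
    have hnpos : 0 < n := List.length_pos_iff.mpr hvne
    -- longest palindromic suffix
    set Q : ℕ → Prop := fun m => ∃ p : List A, p.length = m ∧ p <:+ v ∧ p.reverse = p with hQdef
    have hQ1 : Q 1 := by
      refine ⟨[v.getLast hvne], rfl, ⟨v.dropLast, List.dropLast_append_getLast hvne⟩, rfl⟩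
    set M := Nat.findGreatest Q n with hM
    have hM1 : 1 ≤ M := Nat.le_findGreatest hnpos hQ1
    obtain ⟨p, hplen, hpsuf, hppal⟩ : Q M := Nat.findGreatest_spec hnpos hQ1
    refine ⟨p, hpsuf, hppal, ?_⟩
    intro hinf
    -- p occurs in v.dropLast, i.e. strictly before the final occurrence
    have hvd : v.dropLast = factorAt u i (n - 1) := by
      rw [List.dropLast_eq_take, ← hn]
      conv_lhs => rw [hocc]
      rw [factorAt_take u (by omega)]
    rw [hvd] at hinf
    obtain ⟨k, hk, hocck⟩ := occursAt_of_infix hinf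
    have hplen' : p.length ≤ n := hpsuf.length_le
    have hoccb : OccursAt u p (i + (n - p.length)) := occursAt_of_suffix hoccv hpsuf
    set b := i + (n - p.length) with hb
    have hltb : i + k < b := by omega
    -- the latest occurrence of p before b
    set P2 : ℕ → Prop := fun m => i ≤ m ∧ OccursAt u p m with hP2
    set j' := Nat.findGreatest P2 (b - 1) with hj'
    have hP2j : P2 j' := Nat.findGreatest_spec (show i + k ≤ b - 1 by omega) ⟨by omega, hocck⟩
    have hj'ge : i + k ≤ j' := Nat.le_findGreatest (by omega) ⟨by omega, hocck⟩
    have hj'lt : j' < b := by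
      have := Nat.findGreatest_le (P := P2) (b - 1)
      omega
    -- complete return to p from j' to b
    have hcr : IsCompleteReturn u p (factorAt u j' (b + p.length - j')) := by
      refine ⟨j', b, hj'lt, hP2j.2, hoccb, ?_, rfl⟩
      intro k' hk1 hk2 hocck'
      have := Nat.findGreatest_is_greatest (P := P2) (n := b - 1) hk1 (by omega)
      exact this ⟨by omega, hocck'⟩
    have hpl : p ∈ Lang u := ⟨b, hoccb⟩
    have hrpal := hret p hpl hppal _ hcr
    -- but this return is a palindromic suffix of v longer than p
    have hrsuf : factorAt u j' (b + p.length - j') <:+ v := by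
      have h1 : v.drop (j' - i) = factorAt u (i + (j' - i)) (n - (j' - i)) := by
        conv_lhs => rw [hocc]
        rw [factorAt_drop]
      have e1 : i + (j' - i) = j' := by omega
      have e2 : n - (j' - i) = b + p.length - j' := by omega
      rw [e1, e2] at h1
      rw [← h1]
      exact List.drop_suffix _ v
    have hQr : Q (b + p.length - j') :=
      ⟨factorAt u j' (b + p.length - j'), factorAt_length u _ _, hrsuf, hrpal⟩
    have hgt : M < b + p.length - j' := by omega
    have hle : b + p.length - j' ≤ n := by omega
    exact Nat.findGreatest_is_greatest hgt hle hQr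

end StmtAux

open ZDC in
/-- `D(u) = 0` iff all complete return words of all palindromic factors
of `u` are palindromes. -/
theorem stmt_15 {A : Type*} [Fintype A] (u : ℕ → A) :
    Defect u = 0 ↔
      ∀ w ∈ Lang u, w.reverse = w → ∀ r, IsCompleteReturn u w r → r.reverse = r := by
  exact StmtAux.main_thm u
end
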